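/- arXiv:2102.12053 — 7 statements merged into one kernel-verified Lean document; each statement's English description precedes it below -/
import Mathlib

section
/- If n ≡ 0 (mod 3) and n ≥ 3, then the path P_n has a maximum dissociation set that contains exactly one of the two leaves of P_n. -/
open scoped Classical

/-- `F` is a dissociation set of `G`: the induced subgraph `G[F]` has maximum degree ≤ 1. -/
def IsDissocSet {V : Type*} (G : SimpleGraph V) (F : Set V) : Prop :=
  ∀ u ∈ F, ∀ w ∈ F, ∀ w' ∈ F, G.Adj u w → G.Adj u w' → w = w'

/-- `F` is a maximum dissociation set of `G`. -/
def IsMaxDissocSet {V : Type*} (G : SimpleGraph V) (F : Set V) : Prop :=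
  IsDissocSet G F ∧ ∀ F' : Set V, IsDissocSet G F' → F'.ncard ≤ F.ncard

/-- The dissociation number ψ(G). -/
noncomputable def dissNum {V : Type*} (G : SimpleGraph V) : ℕ :=
  sSup {n | ∃ F : Set V, IsDissocSet G F ∧ F.ncard = n}

/-- `F` is a maximum dissociation set of the induced subgraph `G[S]`. -/
def IsMaxDissocOn {V : Type*} (G : SimpleGraph V) (S F : Set V) : Prop :=
  F ⊆ S ∧ IsDissocSet G F ∧
    ∀ F' : Set V, F' ⊆ S → IsDissocSet G F' → F'.ncard ≤ F.ncard

/-- The dissociation number of the induced subgraph `G[S]`. -/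
noncomputable def dissNumOn {V : Type*} (G : SimpleGraph V) (S : Set V) : ℕ :=
  sSup {n | ∃ F : Set V, F ⊆ S ∧ IsDissocSet G F ∧ F.ncard = n}

/-!
Keep the vertices of `P_n` whose index is not `≡ 2 (mod 3)`: they induce disjoint edges
`{3a, 3a + 1}`, so they form a dissociation set of size `2n/3` containing the leaf `0` but not the
leaf `n - 1`. It is maximum because no dissociation set contains three consecutive vertices, hence
at most two from each block `{3a, 3a + 1, 3a + 2}`.
-/

open Finset SimpleGraph

lemma Set.ncard_setOf_fin_eq_count (p : ℕ → Prop) [DecidablePred p] (n : ℕ) :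
    {i : Fin n | p i}.ncard = Nat.count p n := by
  rw [Nat.count_eq_card_filter_range, ← Nat.Iio_eq_range, ← Fin.map_valEmbedding_univ,
    filter_map, card_map, ← Set.ncard_coe_finset]
  simp

lemma Nat.count_mod_three_ne_two (k : ℕ) : Nat.count (· % 3 ≠ 2) (3 * k) = 2 * k := by
  induction k with
  | zero => rfl
  | succ k ih =>
    rw [Nat.mul_succ, Nat.count_add, ih]
    simp [Nat.count_succ, Nat.mul_succ]

lemma isDissocSet_pathGraph_setOf_mod_three_ne_two (n : ℕ) :
    IsDissocSet (pathGraph n) {i : Fin n | i.val % 3 ≠ 2} := by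
  intro u hu w hw w' hw' huw huw'
  simp only [Set.mem_ofPred_eq] at hu hw hw'
  rw [pathGraph_adj] at huw huw'
  exact Fin.ext (by omega)

namespace IsDissocSet

variable {n : ℕ} {F : Set (Fin n)}

lemma exists_notMem_image_val_Ico (hF : IsDissocSet (pathGraph n) F) (a : ℕ) :
    ∃ j ∈ Ico a (a + 3), j ∉ Fin.val '' F := by
  by_contra! h
  obtain ⟨i₀, hi₀, hv₀⟩ := h a (by simp)
  obtain ⟨i₁, hi₁, hv₁⟩ := h (a + 1) (by simp)
  obtain ⟨i₂, hi₂, hv₂⟩ := h (a + 2) (by simp)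
  have := hF i₁ hi₁ i₀ hi₀ i₂ hi₂ (pathGraph_adj.mpr (by omega)) (pathGraph_adj.mpr (by omega))
  omega

lemma card_filter_div_three_le_two (hF : IsDissocSet (pathGraph n) F) (a : ℕ) :
    #{i ∈ F.toFinset | i.val / 3 = a} ≤ 2 := by
  obtain ⟨j, hj, hjF⟩ := hF.exists_notMem_image_val_Ico (3 * a)
  calc #{i ∈ F.toFinset | i.val / 3 = a}
      = #({i ∈ F.toFinset | i.val / 3 = a}.map Fin.valEmbedding) := (card_map _).symm
    _ ≤ #((Ico (3 * a) (3 * a + 3)).erase j) := by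
        refine card_le_card fun x hx => ?_
        simp only [mem_map, mem_filter, Set.mem_toFinset, Fin.valEmbedding_apply] at hx
        obtain ⟨i, ⟨hi, hia⟩, rfl⟩ := hx
        simp only [mem_erase, mem_Ico]
        exact ⟨fun h => hjF (h ▸ Set.mem_image_of_mem _ hi), by omega, by omega⟩
    _ = 2 := by simp [card_erase_of_mem hj]

lemma ncard_le_of_three_dvd (hF : IsDissocSet (pathGraph n) F) (hn : 3 ∣ n) :
    F.ncard ≤ 2 * (n / 3) := by
  rw [Set.ncard_eq_toFinset_card', ← card_range (n / 3)]
  refine card_le_mul_card_image_of_maps_to (fun i _ => ?_) 2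
    fun a _ => hF.card_filter_div_three_le_two a
  simp only [mem_range]
  omega

end IsDissocSet

theorem stmt1 (n : ℕ) (h3 : 3 ≤ n) (hmod : n % 3 = 0) :
    ∃ F : Set (Fin n), IsMaxDissocSet (SimpleGraph.pathGraph n) F ∧
      Xor' ((⟨0, by omega⟩ : Fin n) ∈ F) ((⟨n - 1, by omega⟩ : Fin n) ∈ F) := by
  obtain ⟨k, rfl⟩ : 3 ∣ n := Nat.dvd_of_mod_eq_zero hmod
  have hcard : {i : Fin (3 * k) | i.val % 3 ≠ 2}.ncard = 2 * k := by
    rw [Set.ncard_setOf_fin_eq_count (· % 3 ≠ 2), Nat.count_mod_three_ne_two]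
  refine ⟨{i | i.val % 3 ≠ 2},
    ⟨isDissocSet_pathGraph_setOf_mod_three_ne_two _, fun F' hF' => ?_⟩, Or.inl ⟨?_, ?_⟩⟩
  · simpa [hcard] using hF'.ncard_le_of_three_dvd (dvd_mul_right 3 k)
  · simp
  · simp only [Set.mem_ofPred_eq, not_not]
    omega
end

section
/- If n ≡ 1 (mod 3) and n ≥ 4, then both leaves of the path P_n belong to every maximum dissociation set of P_n. -/
open scoped Classical

lemma block_bound {n k a : ℕ} (hkn : a + 3*k ≤ n) (F : Set (Fin n))
    (hF : IsDissocSet (SimpleGraph.pathGraph n) F)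
    (hmem : ∀ i ∈ F, a ≤ i.val ∧ i.val < a + 3*k) :
    F.ncard ≤ 2*k := by
  classical
  rw [Set.ncard_eq_toFinset_card']
  have key := Finset.card_eq_sum_card_fiberwise
    (f := fun i : Fin n => (i.val - a)/3) (s := F.toFinset) (t := Finset.range k)
    (by intro i hi
        rw [Finset.mem_coe, Set.mem_toFinset] at hi
        have := hmem i hi
        simp only [Finset.mem_coe, Finset.mem_range]; omega)
  rw [key]
  have hbnd : ∀ j ∈ Finset.range k,
      (F.toFinset.filter (fun i => (i.val - a)/3 = j)).card ≤ 2 := by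
    intro j hj
    rw [Finset.mem_range] at hj
    by_contra hcon
    push_neg at hcon
    have h1 : a + 3*j < n := by omega
    have h2 : a + 3*j + 1 < n := by omega
    have h3 : a + 3*j + 2 < n := by omega
    set v0 : Fin n := ⟨a+3*j, h1⟩ with hv0
    set v1 : Fin n := ⟨a+3*j+1, h2⟩ with hv1
    set v2 : Fin n := ⟨a+3*j+2, h3⟩ with hv2
    have hsub : F.toFinset.filter (fun i => (i.val - a)/3 = j) ⊆ {v0, v1, v2} := by
      intro i hi
      rw [Finset.mem_filter, Set.mem_toFinset] at hi
      have hm := hmem i hi.1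
      have hval : i.val = a+3*j ∨ i.val = a+3*j+1 ∨ i.val = a+3*j+2 := by
        have := hi.2; omega
      simp only [Finset.mem_insert, Finset.mem_singleton]
      rcases hval with h|h|h
      · exact Or.inl (Fin.ext h)
      · exact Or.inr (Or.inl (Fin.ext h))
      · exact Or.inr (Or.inr (Fin.ext h))
    have hcard3 : ({v0, v1, v2} : Finset (Fin n)).card ≤ 3 := by
      apply le_trans (Finset.card_insert_le _ _)
      have := Finset.card_insert_le v1 ({v2} : Finset (Fin n))
      simp only [Finset.card_singleton] at this ⊢
      omega
    have heq := Finset.eq_of_subset_of_card_le hsub (by omega)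
    have hv0F : v0 ∈ F := by
      have : v0 ∈ F.toFinset.filter (fun i => (i.val - a)/3 = j) := by
        rw [heq]; simp
      rw [Finset.mem_filter, Set.mem_toFinset] at this; exact this.1
    have hv1F : v1 ∈ F := by
      have : v1 ∈ F.toFinset.filter (fun i => (i.val - a)/3 = j) := by
        rw [heq]; simp
      rw [Finset.mem_filter, Set.mem_toFinset] at this; exact this.1
    have hv2F : v2 ∈ F := by
      have : v2 ∈ F.toFinset.filter (fun i => (i.val - a)/3 = j) := by
        rw [heq]; simp
      rw [Finset.mem_filter, Set.mem_toFinset] at this; exact this.1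
    have hadj01 : (SimpleGraph.pathGraph n).Adj v1 v0 := by
      rw [SimpleGraph.pathGraph_adj]; right; simp [hv0, hv1]
    have hadj12 : (SimpleGraph.pathGraph n).Adj v1 v2 := by
      rw [SimpleGraph.pathGraph_adj]; left; simp [hv1, hv2]
    have := hF v1 hv1F v0 hv0F v2 hv2F hadj01 hadj12
    have : v0.val = v2.val := congrArg Fin.val this
    simp [hv0, hv2] at this
  calc ∑ j ∈ Finset.range k, (F.toFinset.filter (fun i => (i.val - a)/3 = j)).card
      ≤ ∑ _j ∈ Finset.range k, 2 := Finset.sum_le_sum hbnd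
    _ = 2*k := by simp [Finset.sum_const, Finset.card_range, Nat.mul_comm]

lemma lower_diss {n k : ℕ} (hn : n = 3*k+1) :
    ∃ F : Set (Fin n), IsDissocSet (SimpleGraph.pathGraph n) F ∧ 2*k+1 ≤ F.ncard := by
  classical
  refine ⟨{i : Fin n | i.val % 3 ≠ 2}, ?_, ?_⟩
  · intro u hu w hw w' hw' haw haw'
    rw [SimpleGraph.pathGraph_adj] at haw haw'
    simp only [Set.mem_setOf_eq] at hu hw hw'
    apply Fin.ext
    omega
  · have hlt : ∀ j : Fin (2*k+1), 3*(j.val/2) + j.val%2 < n := by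
      intro j; have := j.isLt; omega
    set s : Finset (Fin n) :=
      Finset.image (fun j : Fin (2*k+1) => (⟨3*(j.val/2) + j.val%2, hlt j⟩ : Fin n))
        Finset.univ with hs
    have hscard : s.card = 2*k+1 := by
      rw [hs, Finset.card_image_of_injective _ ?_, Finset.card_univ, Fintype.card_fin]
      intro j j' hjj'
      have : 3*(j.val/2) + j.val%2 = 3*(j'.val/2) + j'.val%2 := congrArg Fin.val hjj'
      exact Fin.ext (by omega)
    have hsub : (↑s : Set (Fin n)) ⊆ {i : Fin n | i.val % 3 ≠ 2} := by
      intro i hi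
      simp only [hs, Finset.coe_image, Set.mem_image] at hi
      obtain ⟨j, _, rfl⟩ := hi
      simp only [Set.mem_setOf_eq]
      omega
    calc 2*k+1 = (↑s : Set (Fin n)).ncard := by rw [Set.ncard_coe_finset, hscard]
      _ ≤ _ := Set.ncard_le_ncard hsub (Set.toFinite _)

theorem stmt2 (n : ℕ) (h4 : 4 ≤ n) (hmod : n % 3 = 1) :
    ∀ F : Set (Fin n), IsMaxDissocSet (SimpleGraph.pathGraph n) F →
      (⟨0, by omega⟩ : Fin n) ∈ F ∧ (⟨n - 1, by omega⟩ : Fin n) ∈ F := by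
  obtain ⟨k, hk⟩ : ∃ k, n = 3*k+1 := ⟨n/3, by omega⟩
  rintro F ⟨hdiss, hmax⟩
  obtain ⟨F₀, hF₀diss, hF₀card⟩ := lower_diss hk
  have hge : 2*k+1 ≤ F.ncard := le_trans hF₀card (hmax F₀ hF₀diss)
  constructor
  · by_contra h0
    have hb := block_bound (a := 1) (k := k) (by omega) F hdiss ?_
    · omega
    · intro i hi
      have : i.val ≠ 0 := by
        intro h
        exact h0 (by rwa [show (⟨0, by omega⟩ : Fin n) = i from (Fin.ext h.symm)])
      have := i.isLt
      omega
  · by_contra h0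
    have hb := block_bound (a := 0) (k := k) (by omega) F hdiss ?_
    · omega
    · intro i hi
      have : i.val ≠ n - 1 := by
        intro h
        exact h0 (by rwa [show (⟨n-1, by omega⟩ : Fin n) = i from (Fin.ext h.symm)])
      have := i.isLt
      omega
end

section
/- If n ≡ 1 (mod 3) and n ≥ 4, and u is a leaf of the path P_n, then there exists a maximum dissociation set F of P_n containing u such that u has degree 0 in the induced subgraph P_n[F]. -/
open scoped Classical

/-! A dissociation set of a path contains no three consecutive vertices, so each of the blocks
`{3j+1, 3j+2, 3j+3}` of `P_{3k+1}` (with vertices `0, …, 3k`) meets it in at most two vertices and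
`ψ(P_{3k+1}) ≤ 2k + 1`. Deleting the vertices `≡ r (mod 3)` leaves `2k + 1` vertices inducing a
disjoint union of edges and isolated vertices; taking `r = 1` when `u = 0` and `r = 2` when
`u = 3k` keeps `u` and deletes its only neighbour. -/

open SimpleGraph Finset

theorem Finset.three_mul_card_le_of_not_three_consecutive {n : ℕ} {s : Finset ℕ}
    (hs : s ⊆ range n) (h : ∀ i ∈ s, i + 1 ∈ s → i + 2 ∉ s) : 3 * #s ≤ 2 * n + 2 := by
  induction n using Nat.strong_induction_on generalizing s with
  | _ n ih =>
  rcases Nat.lt_or_ge n 3 with hn | hn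
  · have := card_le_card hs
    rw [card_range] at this
    omega
  obtain ⟨m, rfl⟩ : ∃ m, n = m + 3 := ⟨n - 3, by omega⟩
  have hlow : 3 * #{i ∈ s | i < m} ≤ 2 * m + 2 :=
    ih m (by omega) (fun i hi => mem_range.2 (mem_filter.1 hi).2)
      (fun i hi hi1 hi2 => h i (mem_filter.1 hi).1 (mem_filter.1 hi1).1 (mem_filter.1 hi2).1)
  have htop : #{i ∈ s | ¬ i < m} ≤ 2 := by
    obtain ⟨j, hj, hjs⟩ : ∃ j ∈ ({m, m + 1, m + 2} : Finset ℕ), j ∉ s := by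
      by_contra! hall
      exact h m (hall m (by simp)) (hall (m + 1) (by simp)) (hall (m + 2) (by simp))
    calc #{i ∈ s | ¬ i < m} ≤ #(({m, m + 1, m + 2} : Finset ℕ).erase j) := by
          refine card_le_card fun i hi => ?_
          rw [mem_filter] at hi
          have := mem_range.1 (hs hi.1)
          simp only [mem_erase, mem_insert, mem_singleton]
          exact ⟨by rintro rfl; exact hjs hi.1, by omega⟩
      _ = 2 := by
          rw [card_erase_of_mem hj, card_insert_of_notMem (by simp),
            card_insert_of_notMem (by simp), card_singleton]
  have := card_filter_add_card_filter_not (s := s) (· < m)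
  omega

theorem Finset.card_filter_mod_three_ne (k r : ℕ) (hr : r = 1 ∨ r = 2) :
    #{i ∈ range (3 * k + 1) | i % 3 ≠ r} = 2 * k + 1 := by
  have hcount : #{i ∈ range (3 * k + 1) | i % 3 = r} = k := by
    have := Nat.count_modEq_card (3 * k + 1) (r := 3) three_pos r
    rw [Nat.count_eq_card_filter_range] at this
    rcases hr with rfl | rfl <;> simp [Nat.ModEq, Nat.add_mod] at this <;> omega
  have := card_filter_add_card_filter_not (s := range (3 * k + 1)) (· % 3 = r)
  rw [card_range, hcount] at this
  simp only [ne_eq]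
  omega

theorem Set.ncard_eq_card_map_valEmbedding {n : ℕ} (F : Set (Fin n)) :
    F.ncard = #(F.toFinset.map Fin.valEmbedding) := by
  rw [card_map, Set.ncard_eq_toFinset_card']

theorem ncard_setOf_mod_three_ne (k r : ℕ) (hr : r = 1 ∨ r = 2) :
    {i : Fin (3 * k + 1) | i.val % 3 ≠ r}.ncard = 2 * k + 1 := by
  rw [Set.ncard_eq_card_map_valEmbedding, ← card_filter_mod_three_ne k r hr]
  congr 1
  ext m
  simp [Fin.exists_iff, and_comm]

theorem pathGraph_val_eq_zero_or_of_ncard_neighborSet_eq_one {n : ℕ} {u : Fin n}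
    (hu : ((pathGraph n).neighborSet u).ncard = 1) : u.val = 0 ∨ u.val + 1 = n := by
  by_contra! hinner
  obtain ⟨v, hv⟩ := Set.ncard_eq_one.1 hu
  have hprev : (⟨u.val - 1, by omega⟩ : Fin n) ∈ (pathGraph n).neighborSet u := by
    simp only [mem_neighborSet, pathGraph_adj]
    omega
  have hnext : (⟨u.val + 1, by omega⟩ : Fin n) ∈ (pathGraph n).neighborSet u := by
    rw [mem_neighborSet, pathGraph_adj]
    exact .inl rfl
  rw [hv, Set.mem_singleton_iff] at hprev hnext
  have := Fin.mk.inj (hprev.trans hnext.symm)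
  omega

theorem IsDissocSet.pathGraph_not_three_consecutive {n : ℕ} {F : Set (Fin n)}
    (hF : IsDissocSet (pathGraph n) F) {a b c : Fin n} (hab : a.val + 1 = b.val)
    (hbc : b.val + 1 = c.val) (ha : a ∈ F) (hb : b ∈ F) : c ∉ F := fun hc => by
  have hac := hF b hb a ha c hc (by rw [pathGraph_adj]; omega) (by rw [pathGraph_adj]; omega)
  have := Fin.val_eq_of_eq hac
  omega

theorem IsDissocSet.three_mul_ncard_le_pathGraph {n : ℕ} {F : Set (Fin n)}
    (hF : IsDissocSet (pathGraph n) F) : 3 * F.ncard ≤ 2 * n + 2 := by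
  rw [F.ncard_eq_card_map_valEmbedding]
  refine three_mul_card_le_of_not_three_consecutive (fun i hi => ?_) (fun i hi hi1 hi2 => ?_)
  · obtain ⟨a, -, rfl⟩ := mem_map.1 hi
    exact mem_range.2 a.isLt
  · simp only [mem_map, Set.mem_toFinset, Fin.valEmbedding_apply] at hi hi1 hi2
    obtain ⟨a, ha, rfl⟩ := hi
    obtain ⟨b, hb, hab⟩ := hi1
    obtain ⟨c, hc, hac⟩ := hi2
    exact hF.pathGraph_not_three_consecutive (b := b) (by omega) (by omega) ha hb hc

theorem isDissocSet_pathGraph_setOf_mod_three_ne (n r : ℕ) (hr : r < 3) :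
    IsDissocSet (pathGraph n) {i : Fin n | i.val % 3 ≠ r} := by
  intro x hx w hw w' hw' hxw hxw'
  simp only [pathGraph_adj, Set.mem_ofPred_eq] at *
  ext
  omega

theorem stmt3_general (n : ℕ) (hmod : n % 3 = 1) (u : Fin n)
    (hu : ((SimpleGraph.pathGraph n).neighborSet u).ncard = 1) :
    ∃ F : Set (Fin n), IsMaxDissocSet (SimpleGraph.pathGraph n) F ∧ u ∈ F ∧
      ∀ w ∈ F, ¬ (SimpleGraph.pathGraph n).Adj u w := by
  obtain ⟨k, rfl⟩ : ∃ k, n = 3 * k + 1 := ⟨n / 3, by omega⟩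
  obtain ⟨r, hr, hur, hnbr⟩ : ∃ r, (r = 1 ∨ r = 2) ∧ u.val % 3 ≠ r ∧
      ∀ w, (pathGraph (3 * k + 1)).Adj u w → w.val % 3 = r := by
    rcases pathGraph_val_eq_zero_or_of_ncard_neighborSet_eq_one hu with hfirst | hlast
    · exact ⟨1, .inl rfl, by omega, fun w hw => by rw [pathGraph_adj] at hw; omega⟩
    · exact ⟨2, .inr rfl, by omega, fun w hw => by rw [pathGraph_adj] at hw; omega⟩
  refine ⟨{i | i.val % 3 ≠ r}, ⟨isDissocSet_pathGraph_setOf_mod_three_ne _ r (by omega),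
    fun F hF => ?_⟩, hur, fun w hw hadj => hw (hnbr w hadj)⟩
  have := hF.three_mul_ncard_le_pathGraph
  rw [ncard_setOf_mod_three_ne k r hr]
  omega

theorem stmt3 (n : ℕ) (h4 : 4 ≤ n) (hmod : n % 3 = 1) (u : Fin n)
    (hu : ((SimpleGraph.pathGraph n).neighborSet u).ncard = 1) :
    ∃ F : Set (Fin n), IsMaxDissocSet (SimpleGraph.pathGraph n) F ∧ u ∈ F ∧
      ∀ w ∈ F, ¬ (SimpleGraph.pathGraph n).Adj u w :=
  stmt3_general n hmod u hu
end

section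
/- If n ≡ 2 (mod 3) and n ≥ 2, then the path P_n has exactly one maximum dissociation set F; moreover F contains both leaves u and v of P_n, and each of u, v has degree exactly 1 in the induced subgraph P_n[F]. -/
open scoped Classical

section aux
variable {n k : ℕ}

private lemma adj_iff {n : ℕ} {u v : Fin n} :
    (SimpleGraph.pathGraph n).Adj u v ↔ u.val + 1 = v.val ∨ v.val + 1 = u.val :=
  SimpleGraph.pathGraph_adj

private lemma helper3 {F : Set (Fin n)} (hF : IsDissocSet (SimpleGraph.pathGraph n) F)
    (x y z : Fin n) (hx : x ∈ F) (hy : y ∈ F) (hz : z ∈ F)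
    (h1 : x.val + 1 = y.val) (h2 : y.val + 1 = z.val) : False := by
  have h := hF y hy x hx z hz (adj_iff.mpr (Or.inr h1)) (adj_iff.mpr (Or.inl h2))
  have : x.val = z.val := congrArg Fin.val h
  omega

private lemma fiber_le (hn : n = 3*k+2) {F : Set (Fin n)}
    (hF : IsDissocSet (SimpleGraph.pathGraph n) F) (j : ℕ) :
    (F.toFinset.filter (fun v => v.val / 3 = j)).card ≤ 2 := by
  by_contra h
  push_neg at h
  obtain ⟨a, b, c, ha, hb, hc, hab, hac, hbc⟩ := Finset.two_lt_card_iff.mp h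
  simp only [Finset.mem_filter, Set.mem_toFinset] at ha hb hc
  have haF := ha.1; have hbF := hb.1; have hcF := hc.1
  have habv : a.val ≠ b.val := fun h => hab (Fin.ext h)
  have hacv : a.val ≠ c.val := fun h => hac (Fin.ext h)
  have hbcv : b.val ≠ c.val := fun h => hbc (Fin.ext h)
  have ha2 : 3*j ≤ a.val ∧ a.val < 3*j+3 := by have := ha.2; omega
  have hb2 : 3*j ≤ b.val ∧ b.val < 3*j+3 := by have := hb.2; omega
  have hc2 : 3*j ≤ c.val ∧ c.val < 3*j+3 := by have := hc.2; omega
  clear ha hb hc hab hac hbc h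
  have hmid : a.val = 3*j+1 ∨ b.val = 3*j+1 ∨ c.val = 3*j+1 := by omega
  rcases hmid with hm | hm | hm
  · have : (b.val = 3*j ∧ c.val = 3*j+2) ∨ (c.val = 3*j ∧ b.val = 3*j+2) := by omega
    rcases this with ⟨p, q⟩ | ⟨p, q⟩
    · exact helper3 hF b a c hbF haF hcF (by omega) (by omega)
    · exact helper3 hF c a b hcF haF hbF (by omega) (by omega)
  · have : (a.val = 3*j ∧ c.val = 3*j+2) ∨ (c.val = 3*j ∧ a.val = 3*j+2) := by omega
    rcases this with ⟨p, q⟩ | ⟨p, q⟩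
    · exact helper3 hF a b c haF hbF hcF (by omega) (by omega)
    · exact helper3 hF c b a hcF hbF haF (by omega) (by omega)
  · have : (a.val = 3*j ∧ b.val = 3*j+2) ∨ (b.val = 3*j ∧ a.val = 3*j+2) := by omega
    rcases this with ⟨p, q⟩ | ⟨p, q⟩
    · exact helper3 hF a c b haF hcF hbF (by omega) (by omega)
    · exact helper3 hF b c a hbF hcF haF (by omega) (by omega)

private lemma card_le (hn : n = 3*k+2) {F : Set (Fin n)}
    (hF : IsDissocSet (SimpleGraph.pathGraph n) F) :
    F.toFinset.card ≤ 2*(k+1) ∧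
    (2*(k+1) ≤ F.toFinset.card → ∀ j, j ≤ k →
      (F.toFinset.filter (fun v => v.val / 3 = j)).card = 2) := by
  have hmap : ∀ v ∈ F.toFinset, v.val / 3 ∈ Finset.range (k+1) := by
    intro v _
    rw [Finset.mem_range]
    have := v.isLt
    omega
  have hsum := Finset.card_eq_sum_card_fiberwise hmap
  have hle : F.toFinset.card ≤ 2*(k+1) := by
    rw [hsum]
    calc ∑ j ∈ Finset.range (k+1), (F.toFinset.filter (fun v => v.val / 3 = j)).card
        ≤ ∑ _j ∈ Finset.range (k+1), 2 :=
          Finset.sum_le_sum (fun j _ => fiber_le hn hF j)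
      _ = 2*(k+1) := by rw [Finset.sum_const, Finset.card_range]; ring
  refine ⟨hle, ?_⟩
  intro hcard j hj
  by_contra hne
  have hlt : (F.toFinset.filter (fun v => v.val / 3 = j)).card < 2 :=
    lt_of_le_of_ne (fiber_le hn hF j) hne
  have : F.toFinset.card < 2*(k+1) := by
    rw [hsum]
    calc ∑ i ∈ Finset.range (k+1), (F.toFinset.filter (fun v => v.val / 3 = i)).card
        < ∑ _i ∈ Finset.range (k+1), 2 :=
          Finset.sum_lt_sum (fun i _ => fiber_le hn hF i)
            ⟨j, Finset.mem_range.mpr (by omega), hlt⟩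
      _ = 2*(k+1) := by rw [Finset.sum_const, Finset.card_range]; ring
  omega

private lemma pair_mem (hn : n = 3*k+2) {F : Set (Fin n)} {j : ℕ} (hj : j ≤ k)
    (hsub : ∀ x : Fin n, x ∈ F → x.val / 3 = j → x.val = 3*j ∨ x.val = 3*j+1)
    (hcard : (F.toFinset.filter (fun v => v.val / 3 = j)).card = 2) :
    ∀ v : Fin n, (v.val = 3*j ∨ v.val = 3*j+1) → v ∈ F := by
  have h1 : 3*j < n := by omega
  have h2 : 3*j+1 < n := by omega
  have hsub' : F.toFinset.filter (fun v => v.val / 3 = j) ⊆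
      {(⟨3*j, h1⟩ : Fin n), ⟨3*j+1, h2⟩} := by
    intro x hx
    simp only [Finset.mem_filter, Set.mem_toFinset] at hx
    rcases hsub x hx.1 hx.2 with h | h
    · exact Finset.mem_insert.mpr (Or.inl (Fin.ext h))
    · exact Finset.mem_insert.mpr (Or.inr (Finset.mem_singleton.mpr (Fin.ext h)))
  have hpc : ({(⟨3*j, h1⟩ : Fin n), ⟨3*j+1, h2⟩} : Finset (Fin n)).card = 2 := by
    rw [Finset.card_pair]
    intro h
    have : (3*j : ℕ) = 3*j+1 := congrArg Fin.val h
    omega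
  have hfe : F.toFinset.filter (fun v => v.val / 3 = j) =
      {(⟨3*j, h1⟩ : Fin n), ⟨3*j+1, h2⟩} :=
    Finset.eq_of_subset_of_card_le hsub' (by rw [hpc, hcard])
  intro v hv
  have hvm : v ∈ F.toFinset.filter (fun v => v.val / 3 = j) := by
    rw [hfe]
    rcases hv with h | h
    · exact Finset.mem_insert.mpr (Or.inl (Fin.ext h))
    · exact Finset.mem_insert.mpr (Or.inr (Finset.mem_singleton.mpr (Fin.ext h)))
  exact Set.mem_toFinset.mp (Finset.mem_filter.mp hvm).1

private lemma structure_lem (hn : n = 3*k+2) {F : Set (Fin n)}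
    (hF : IsDissocSet (SimpleGraph.pathGraph n) F)
    (heq : ∀ j, j ≤ k → (F.toFinset.filter (fun v => v.val / 3 = j)).card = 2) :
    ∀ d, d ≤ k → ∀ v : Fin n, (v.val = 3*(k-d) ∨ v.val = 3*(k-d)+1) → v ∈ F := by
  intro d
  induction d with
  | zero =>
    intro _ v hv
    refine pair_mem hn (j := k) le_rfl ?_ (heq k le_rfl) v (by simpa using hv)
    intro x _ hx
    have := x.isLt
    omega
  | succ d ih =>
    intro hd
    have h3 : (⟨3*(k-d), by omega⟩ : Fin n) ∈ F := ih (by omega) _ (Or.inl rfl)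
    have h4 : (⟨3*(k-d)+1, by omega⟩ : Fin n) ∈ F := ih (by omega) _ (Or.inr rfl)
    have hjd : k - d = (k - (d+1)) + 1 := by omega
    set j := k - (d+1) with hjdef
    have hex : ∀ x : Fin n, x ∈ F → x.val ≠ 3*j+2 := by
      intro x hx hxv
      exact helper3 hF x ⟨3*(k-d), by omega⟩ ⟨3*(k-d)+1, by omega⟩ hx h3 h4
        (show x.val + 1 = 3*(k-d) by omega) rfl
    refine pair_mem hn (j := j) (by omega) ?_ (heq j (by omega))
    intro x hx hxd
    have := hex x hx
    omega

private lemma eq_S (hn : n = 3*k+2) {F : Set (Fin n)}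
    (hF : IsDissocSet (SimpleGraph.pathGraph n) F)
    (hcard : 2*(k+1) ≤ F.toFinset.card) :
    F = {v : Fin n | v.val % 3 ≠ 2} := by
  have heq := (card_le hn hF).2 hcard
  have hmem := structure_lem hn hF heq
  have hmem' : ∀ j, j ≤ k → ∀ v : Fin n, (v.val = 3*j ∨ v.val = 3*j+1) → v ∈ F := by
    intro j hj
    have := hmem (k - j) (by omega)
    rwa [Nat.sub_sub_self hj] at this
  ext v
  simp only [Set.mem_setOf_eq]
  constructor
  · intro hv hc
    have hvlt := v.isLt
    have hjk : v.val / 3 + 1 ≤ k := by omega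
    have h3 := hmem' (v.val/3 + 1) hjk ⟨3*(v.val/3+1), by omega⟩ (Or.inl rfl)
    have h4 := hmem' (v.val/3 + 1) hjk ⟨3*(v.val/3+1)+1, by omega⟩ (Or.inr rfl)
    exact helper3 hF v ⟨3*(v.val/3+1), by omega⟩ ⟨3*(v.val/3+1)+1, by omega⟩ hv h3 h4
      (show v.val + 1 = 3*(v.val/3+1) by omega) rfl
  · intro hv
    have hvlt := v.isLt
    exact hmem' (v.val/3) (by omega) v (by omega)

private lemma S_diss (hn : n = 3*k+2) :
    IsDissocSet (SimpleGraph.pathGraph n) {v : Fin n | v.val % 3 ≠ 2} := by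
  intro u hu w hw w' hw' h1 h2
  rw [adj_iff] at h1 h2
  simp only [Set.mem_setOf_eq] at hu hw hw'
  exact Fin.ext (by omega)

private lemma S_card (hn : n = 3*k+2) :
    ({v : Fin n | v.val % 3 ≠ 2} : Set (Fin n)).toFinset.card = 2*(k+1) := by
  have hmap : ∀ v ∈ ({v : Fin n | v.val % 3 ≠ 2} : Set (Fin n)).toFinset,
      v.val / 3 ∈ Finset.range (k+1) := by
    intro v _
    rw [Finset.mem_range]
    have := v.isLt
    omega
  rw [Finset.card_eq_sum_card_fiberwise hmap]
  have hfib : ∀ j ∈ Finset.range (k+1),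
      (({v : Fin n | v.val % 3 ≠ 2} : Set (Fin n)).toFinset.filter
        (fun v => v.val / 3 = j)).card = 2 := by
    intro j hj
    rw [Finset.mem_range] at hj
    have h1 : 3*j < n := by omega
    have h2 : 3*j+1 < n := by omega
    have : (({v : Fin n | v.val % 3 ≠ 2} : Set (Fin n)).toFinset.filter
        (fun v => v.val / 3 = j)) = {(⟨3*j, h1⟩ : Fin n), ⟨3*j+1, h2⟩} := by
      ext x
      simp only [Finset.mem_filter, Set.mem_toFinset, Set.mem_setOf_eq,
        Finset.mem_insert, Finset.mem_singleton, Fin.ext_iff]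
      have := x.isLt
      constructor
      · rintro ⟨p, q⟩
        show x.val = 3*j ∨ x.val = 3*j+1
        omega
      · intro h
        have h' : x.val = 3*j ∨ x.val = 3*j+1 := h
        constructor <;> omega
    rw [this, Finset.card_pair]
    intro h
    have : (3*j : ℕ) = 3*j+1 := congrArg Fin.val h
    omega
  rw [Finset.sum_congr rfl hfib, Finset.sum_const, Finset.card_range, smul_eq_mul]
  ring

end aux


theorem stmt4' (n : ℕ) (h2 : 2 ≤ n) (hmod : n % 3 = 2) :
    (∃! F : Set (Fin n), (IsDissocSet (SimpleGraph.pathGraph n) F ∧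
      ∀ F' : Set (Fin n), IsDissocSet (SimpleGraph.pathGraph n) F' → F'.ncard ≤ F.ncard)) ∧
    ∀ F : Set (Fin n), (IsDissocSet (SimpleGraph.pathGraph n) F ∧
      ∀ F' : Set (Fin n), IsDissocSet (SimpleGraph.pathGraph n) F' → F'.ncard ≤ F.ncard) →
      (⟨0, Nat.zero_lt_of_lt h2⟩ : Fin n) ∈ F ∧ (⟨n - 1, Nat.sub_lt (Nat.zero_lt_of_lt h2) Nat.one_pos⟩ : Fin n) ∈ F ∧
      {w ∈ F | (SimpleGraph.pathGraph n).Adj ⟨0, Nat.zero_lt_of_lt h2⟩ w}.ncard = 1 ∧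
      {w ∈ F | (SimpleGraph.pathGraph n).Adj ⟨n - 1, Nat.sub_lt (Nat.zero_lt_of_lt h2) Nat.one_pos⟩ w}.ncard = 1 := by
  set k := n / 3 with hk
  have hn : n = 3*k+2 := by omega
  set S : Set (Fin n) := {v : Fin n | v.val % 3 ≠ 2} with hS
  have hSc : S.ncard = 2*(k+1) := by
    rw [Set.ncard_eq_toFinset_card']; exact S_card hn
  have hmax : IsDissocSet (SimpleGraph.pathGraph n) S ∧
      ∀ F' : Set (Fin n), IsDissocSet (SimpleGraph.pathGraph n) F' → F'.ncard ≤ S.ncard := by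
    refine ⟨S_diss hn, fun F' hF' => ?_⟩
    rw [hSc, Set.ncard_eq_toFinset_card']
    exact (card_le hn hF').1
  have huniq : ∀ F : Set (Fin n), (IsDissocSet (SimpleGraph.pathGraph n) F ∧
      ∀ F' : Set (Fin n), IsDissocSet (SimpleGraph.pathGraph n) F' → F'.ncard ≤ F.ncard) →
      F = S := by
    rintro F ⟨hFd, hFm⟩
    have h1 : S.ncard ≤ F.ncard := hFm S hmax.1
    refine eq_S hn hFd ?_
    rw [hSc] at h1
    rwa [Set.ncard_eq_toFinset_card'] at h1
  refine ⟨⟨S, hmax, huniq⟩, ?_⟩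
  intro F hF
  rw [huniq F hF]
  refine ⟨?_, ?_, ?_, ?_⟩
  · show (0 : ℕ) % 3 ≠ 2
    omega
  · show (n - 1) % 3 ≠ 2
    omega
  · have he : {w ∈ S | (SimpleGraph.pathGraph n).Adj ⟨0, Nat.zero_lt_of_lt h2⟩ w} =
        {(⟨1, by omega⟩ : Fin n)} := by
      ext w
      simp only [Set.mem_setOf_eq, Set.mem_singleton_iff, adj_iff, Fin.ext_iff]
      show w.val % 3 ≠ 2 ∧ (0 + 1 = w.val ∨ w.val + 1 = 0) ↔ w.val = 1
      omega
    rw [he, Set.ncard_singleton]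
  · have he : {w ∈ S | (SimpleGraph.pathGraph n).Adj ⟨n - 1, Nat.sub_lt (Nat.zero_lt_of_lt h2) Nat.one_pos⟩ w} =
        {(⟨3*k, by omega⟩ : Fin n)} := by
      ext w
      have hw := w.isLt
      simp only [Set.mem_setOf_eq, Set.mem_singleton_iff, adj_iff, Fin.ext_iff]
      show w.val % 3 ≠ 2 ∧ (n - 1 + 1 = w.val ∨ w.val + 1 = n - 1) ↔ w.val = 3*k
      omega
    rw [he, Set.ncard_singleton]

theorem stmt4 (n : ℕ) (h2 : 2 ≤ n) (hmod : n % 3 = 2) :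
    (∃! F : Set (Fin n), IsMaxDissocSet (SimpleGraph.pathGraph n) F) ∧
    ∀ F : Set (Fin n), IsMaxDissocSet (SimpleGraph.pathGraph n) F →
      (⟨0, by omega⟩ : Fin n) ∈ F ∧ (⟨n - 1, by omega⟩ : Fin n) ∈ F ∧
      {w ∈ F | (SimpleGraph.pathGraph n).Adj ⟨0, by omega⟩ w}.ncard = 1 ∧
      {w ∈ F | (SimpleGraph.pathGraph n).Adj ⟨n - 1, by omega⟩ w}.ncard = 1 := by
  exact stmt4' n h2 hmod
end

section
/- Let T be a tree rooted at v such that every vertex other than v has degree at most 2 (equivalently, T is a spider with center v). For a child w of v, let T_w be the subtree rooted at w (a path), and for i = 0,1,2 let C^i(v) be the set of children w of v such that the path from w to the leaf of T_w has order ≡ i (mod 3). Then ψ(T) = Σ_{w ∈ C(v)} ψ(T_w) + 1 if |C^2(v)| = 0 and |C^1(v)| ≤ 1, and ψ(T) = Σ_{w ∈ C(v)} ψ(T_w) otherwise. -/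
open scoped Classical

/-- The spider with center `none` and `k` legs, leg `i` being a path on `n i` vertices
hanging from the center. -/
def spider (k : ℕ) (n : Fin k → ℕ) : SimpleGraph (Option (Σ i : Fin k, Fin (n i))) :=
  SimpleGraph.fromRel (fun a b =>
    (a = none ∧ ∃ (i : Fin k) (h : 0 < n i), b = some ⟨i, ⟨0, h⟩⟩) ∨
    (∃ (i : Fin k) (j j' : Fin (n i)), a = some ⟨i, j⟩ ∧ b = some ⟨i, j'⟩ ∧ (j' : ℕ) = j + 1))

/-- The vertex set of the `i`-th leg of the spider (the subtree below the `i`-th child). -/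
def legSet (k : ℕ) (n : Fin k → ℕ) (i : Fin k) : Set (Option (Σ i : Fin k, Fin (n i))) :=
  {x | ∃ j : Fin (n i), x = some ⟨i, j⟩}

def fpath (m : ℕ) : ℕ := 2 * (m / 3) + m % 3

lemma countMod (m r : ℕ) (hr : r < 3) :
    ((Finset.range m).filter (fun j => j % 3 = r)).card
      = m / 3 + (if r < m % 3 then 1 else 0) := by
  induction m with
  | zero => simp
  | succ m ih =>
    rw [Finset.range_add_one, Finset.filter_insert]
    by_cases h : m % 3 = r
    · rw [if_pos h, Finset.card_insert_of_notMem (by simp), ih]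
      split_ifs <;> omega
    · rw [if_neg h, ih]; split_ifs <;> omega

lemma pathBound : ∀ (m : ℕ) (A : Finset ℕ), (∀ a ∈ A, a < m) →
    (∀ j, j ∈ A → j + 1 ∈ A → j + 2 ∈ A → False) → A.card ≤ fpath m := by
  intro m
  induction m using Nat.strong_induction_on with
  | _ m ih =>
    intro A hA h3
    by_cases hm : m < 3
    · calc A.card ≤ (Finset.range m).card :=
          Finset.card_le_card (fun a ha => Finset.mem_range.2 (hA a ha))
      _ = m := Finset.card_range m
      _ ≤ fpath m := by unfold fpath; omega
    · push_neg at hm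
      have hcard : (A.filter (fun a => a < 3)).card + (A.filter (fun a => ¬ a < 3)).card
          = A.card := Finset.card_filter_add_card_filter_not _
      have h1 : (A.filter (fun a => a < 3)).card ≤ 2 := by
        by_contra h
        push_neg at h
        have hsub : A.filter (fun a => a < 3) ⊆ {0, 1, 2} := by
          intro a ha
          simp only [Finset.mem_filter] at ha
          simp only [Finset.mem_insert, Finset.mem_singleton]
          omega
        have heq := Finset.eq_of_subset_of_card_le hsub (by
          have : ({0,1,2} : Finset ℕ).card = 3 := rfl
          omega)
        have h0 : (0:ℕ) ∈ A := (Finset.mem_filter.1 (by rw [heq]; decide)).1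
        have h1' : (1:ℕ) ∈ A := (Finset.mem_filter.1 (by rw [heq]; decide)).1
        have h2' : (2:ℕ) ∈ A := (Finset.mem_filter.1 (by rw [heq]; decide)).1
        exact h3 0 h0 h1' h2'
      have h2 : (A.filter (fun a => ¬ a < 3)).card ≤ fpath (m - 3) := by
        set A' := (A.filter (fun a => ¬ a < 3)).image (fun a => a - 3) with hA'
        have hmem : ∀ j, j ∈ A' ↔ j + 3 ∈ A := by
          intro j
          simp only [hA', Finset.mem_image, Finset.mem_filter]
          constructor
          · rintro ⟨a, ⟨ha, h3a⟩, rfl⟩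
            have he : a - 3 + 3 = a := by omega
            rwa [he]
          · intro hj; exact ⟨j + 3, ⟨hj, by omega⟩, by omega⟩
        have hcardA' : (A.filter (fun a => ¬ a < 3)).card = A'.card := by
          rw [hA']
          rw [Finset.card_image_of_injOn]
          intro a ha b hb hab
          simp only [Finset.coe_filter, Set.mem_setOf_eq] at ha hb
          dsimp only at hab
          omega
        rw [hcardA']
        apply ih (m - 3) (by omega)
        · intro a ha
          rw [hmem] at ha
          have := hA _ ha
          omega
        · intro j hj hj1 hj2
          rw [hmem] at hj hj1 hj2
          refine h3 (j + 3) hj ?_ ?_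
          · rw [show j + 3 + 1 = j + 1 + 3 by omega]; exact hj1
          · rw [show j + 3 + 2 = j + 2 + 3 by omega]; exact hj2
      have : fpath m = 2 + fpath (m - 3) := by unfold fpath; omega
      omega

lemma shiftBound (s m : ℕ) (A : Finset ℕ) (hlo : ∀ a ∈ A, s ≤ a) (hA : ∀ a ∈ A, a < m)
    (h3 : ∀ j, j ∈ A → j + 1 ∈ A → j + 2 ∈ A → False) : A.card ≤ fpath (m - s) := by
  set A' := A.image (fun a => a - s) with hA'
  have hmem : ∀ j, j ∈ A' ↔ j + s ∈ A := by
    intro j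
    simp only [hA', Finset.mem_image]
    constructor
    · rintro ⟨a, ha, rfl⟩
      have h1 := hlo a ha
      have he : a - s + s = a := by omega
      rwa [he]
    · intro hj; exact ⟨j + s, hj, by omega⟩
  have hcardA' : A.card = A'.card := by
    rw [hA', Finset.card_image_of_injOn]
    intro a ha b hb hab
    have h1 := hlo a ha; have h2 := hlo b hb
    dsimp only at hab
    omega
  rw [hcardA']
  apply pathBound
  · intro a ha
    rw [hmem] at ha
    have h1 := hA _ ha; have h2 := hlo _ ha
    omega
  · intro j hj hj1 hj2
    rw [hmem] at hj hj1 hj2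
    refine h3 (j + s) hj ?_ ?_
    · rw [show j + s + 1 = j + 1 + s by omega]; exact hj1
    · rw [show j + s + 2 = j + 2 + s by omega]; exact hj2

variable {k : ℕ} {n : Fin k → ℕ}

lemma some_eq_some_iff {i i' : Fin k} {j : Fin (n i)} {j' : Fin (n i')} :
    (some ⟨i, j⟩ : Option (Σ i : Fin k, Fin (n i))) = some ⟨i', j'⟩ ↔
      i = i' ∧ (j : ℕ) = (j' : ℕ) := by
  constructor
  · intro h
    obtain ⟨h1, h2⟩ := Sigma.mk.inj_iff.1 (Option.some_injective _ h)
    subst h1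
    exact ⟨rfl, by rw [eq_of_heq h2]⟩
  · rintro ⟨rfl, h⟩
    congr 1
    exact Sigma.ext rfl (heq_of_eq (Fin.ext h))

lemma spider_adj_none {i : Fin k} {j : Fin (n i)} :
    (spider k n).Adj none (some ⟨i, j⟩) ↔ (j : ℕ) = 0 := by
  simp only [spider, SimpleGraph.fromRel_adj, some_eq_some_iff]
  simp only [ne_eq, reduceCtorEq, not_false_eq_true, true_and, false_and, and_false,
    exists_false, or_false, false_or, exists_and_left, true_iff, iff_true]
  constructor
  · rintro ⟨i1, rfl, -, h⟩
    exact h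
  · intro h
    exact ⟨i, rfl, j.pos, h⟩

lemma spider_adj_some {i i' : Fin k} {j : Fin (n i)} {j' : Fin (n i')} :
    (spider k n).Adj (some ⟨i, j⟩) (some ⟨i', j'⟩) ↔
      i = i' ∧ ((j' : ℕ) = j + 1 ∨ (j : ℕ) = j' + 1) := by
  simp only [spider, SimpleGraph.fromRel_adj, some_eq_some_iff]
  simp only [ne_eq, reduceCtorEq, not_false_eq_true, true_and, false_and, and_false,
    exists_false, or_false, false_or, exists_and_left, true_iff, iff_true]
  constructor
  · rintro ⟨-, ⟨i1, j1, ⟨rfl, e1⟩, x, ⟨e3, e2⟩, e4⟩ | ⟨i1, j1, ⟨rfl, e1⟩, x, ⟨e3, e2⟩, e4⟩⟩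
    · exact ⟨e3.symm, Or.inl (by omega)⟩
    · exact ⟨e3, Or.inr (by omega)⟩
  · rintro ⟨rfl, h | h⟩
    · refine ⟨?_, Or.inl ⟨i, j, ⟨rfl, rfl⟩, j', ⟨rfl, rfl⟩, h⟩⟩
      simp only [some_eq_some_iff, not_and]
      omega
    · refine ⟨?_, Or.inr ⟨i, j', ⟨rfl, rfl⟩, j, ⟨rfl, rfl⟩, h⟩⟩
      simp only [some_eq_some_iff, not_and]
      omega

lemma spider_adj_none' {x : Option (Σ i : Fin k, Fin (n i))} (h : (spider k n).Adj none x) :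
    ∃ (i : Fin k) (j : Fin (n i)), x = some ⟨i, j⟩ ∧ (j : ℕ) = 0 := by
  match x with
  | none => exact absurd rfl h.ne
  | some ⟨i, j⟩ => exact ⟨i, j, rfl, spider_adj_none.1 h⟩

noncomputable def Aset (F : Set (Option (Σ i : Fin k, Fin (n i)))) (i : Fin k) :
    Finset (Fin (n i)) := Finset.univ.filter (fun j => some ⟨i, j⟩ ∈ F)

noncomputable def Bset (F : Set (Option (Σ i : Fin k, Fin (n i)))) (i : Fin k) :
    Finset ℕ := (Aset F i).image Fin.val

lemma mem_Bset {F : Set (Option (Σ i : Fin k, Fin (n i)))} {i : Fin k} {j : ℕ} :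
    j ∈ Bset F i ↔ ∃ h : j < n i, some ⟨i, ⟨j, h⟩⟩ ∈ F := by
  simp only [Bset, Aset, Finset.mem_image, Finset.mem_filter, Finset.mem_univ, true_and]
  constructor
  · rintro ⟨a, ha, rfl⟩
    exact ⟨a.2, ha⟩
  · rintro ⟨h, hm⟩
    exact ⟨⟨j, h⟩, hm, rfl⟩

lemma card_Bset (F : Set (Option (Σ i : Fin k, Fin (n i)))) (i : Fin k) :
    (Bset F i).card = (Aset F i).card :=
  Finset.card_image_of_injective _ Fin.val_injective

lemma ncard_split (F : Set (Option (Σ i : Fin k, Fin (n i)))) :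
    F.ncard = (if none ∈ F then 1 else 0) + ∑ i, (Bset F i).card := by
  classical
  rw [Set.ncard_eq_toFinset_card']
  set S := F.toFinset with hS
  have hsplit : (S.filter (fun x => x = none)).card + (S.filter (fun x => ¬ x = none)).card
      = S.card := Finset.card_filter_add_card_filter_not _
  have h1 : (S.filter (fun x => x = none)).card = if none ∈ F then 1 else 0 := by
    by_cases h : none ∈ F
    · rw [if_pos h]
      have : S.filter (fun x => x = none) = {none} := by
        ext x
        simp only [Finset.mem_filter, Finset.mem_singleton, hS, Set.mem_toFinset]
        constructor
        · rintro ⟨-, rfl⟩; rfl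
        · rintro rfl; exact ⟨h, rfl⟩
      rw [this, Finset.card_singleton]
    · rw [if_neg h]
      have : S.filter (fun x => x = none) = ∅ := by
        ext x
        simp only [Finset.mem_filter, Finset.notMem_empty, iff_false, not_and, hS,
          Set.mem_toFinset]
        rintro hx rfl; exact h hx
      rw [this, Finset.card_empty]
  have h2 : S.filter (fun x => ¬ x = none)
      = Finset.univ.biUnion (fun i => (Aset F i).image (fun j => some ⟨i, j⟩)) := by
    ext x
    match x with
    | none => simp
    | some ⟨i, j⟩ =>
      simp only [Finset.mem_filter, hS, Set.mem_toFinset, Finset.mem_biUnion, Finset.mem_univ,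
        true_and, Finset.mem_image]
      constructor
      · rintro ⟨h, -⟩
        refine ⟨i, j, ?_, rfl⟩
        simp only [Aset, Finset.mem_filter, Finset.mem_univ, true_and]
        exact h
      · rintro ⟨i', j', hj', he⟩
        obtain ⟨rfl, hv⟩ := some_eq_some_iff.1 he
        have hjj : j' = j := Fin.ext hv
        subst hjj
        simp only [Aset, Finset.mem_filter, Finset.mem_univ, true_and] at hj'
        exact ⟨hj', by simp⟩
  have h3 : (Finset.univ.biUnion (fun i => (Aset F i).image
        (fun j => (some ⟨i, j⟩ : Option (Σ i : Fin k, Fin (n i)))))).card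
      = ∑ i, ((Aset F i).image
        (fun j => (some ⟨i, j⟩ : Option (Σ i : Fin k, Fin (n i))))).card := by
    apply Finset.card_biUnion
    intro i _ i' _ hne
    rw [Function.onFun, Finset.disjoint_left]
    intro x hx hx'
    simp only [Finset.mem_image] at hx hx'
    obtain ⟨a, -, rfl⟩ := hx
    obtain ⟨b, -, hb⟩ := hx'
    exact hne ((some_eq_some_iff.1 hb).1).symm
  have h4 : ∀ i, ((Aset F i).image
      (fun j => (some ⟨i, j⟩ : Option (Σ i : Fin k, Fin (n i))))).card = (Bset F i).card := by
    intro i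
    rw [card_Bset]
    apply Finset.card_image_of_injective
    intro a b hab
    exact Fin.ext (some_eq_some_iff.1 hab).2
  rw [← hsplit, h1, h2, h3]
  congr 1
  exact Finset.sum_congr rfl (fun i _ => h4 i)

lemma diss_noThree {F : Set (Option (Σ i : Fin k, Fin (n i)))}
    (hF : IsDissocSet (spider k n) F) (i : Fin k) :
    ∀ j, j ∈ Bset F i → j + 1 ∈ Bset F i → j + 2 ∈ Bset F i → False := by
  intro j hj hj1 hj2
  obtain ⟨h0, hm0⟩ := mem_Bset.1 hj
  obtain ⟨h1, hm1⟩ := mem_Bset.1 hj1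
  obtain ⟨h2, hm2⟩ := mem_Bset.1 hj2
  have adj1 : (spider k n).Adj (some ⟨i, ⟨j+1, h1⟩⟩) (some ⟨i, ⟨j, h0⟩⟩) :=
    spider_adj_some.2 ⟨rfl, Or.inr rfl⟩
  have adj2 : (spider k n).Adj (some ⟨i, ⟨j+1, h1⟩⟩) (some ⟨i, ⟨j+2, h2⟩⟩) :=
    spider_adj_some.2 ⟨rfl, Or.inl rfl⟩
  have := hF _ hm1 _ hm0 _ hm2 adj1 adj2
  have h' : j = j + 2 := (some_eq_some_iff.1 this).2
  omega

lemma Bset_lt {F : Set (Option (Σ i : Fin k, Fin (n i)))} {i : Fin k} :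
    ∀ a ∈ Bset F i, a < n i := fun a ha => (mem_Bset.1 ha).1

lemma dissNum_eq {V : Type*} (G : SimpleGraph V) (N : ℕ)
    (h1 : ∃ F : Set V, IsDissocSet G F ∧ F.ncard = N)
    (h2 : ∀ F : Set V, IsDissocSet G F → F.ncard ≤ N) : dissNum G = N := by
  have hub : ∀ m ∈ {m | ∃ F : Set V, IsDissocSet G F ∧ F.ncard = m}, m ≤ N := by
    rintro m ⟨F, hF, rfl⟩; exact h2 F hF
  exact le_antisymm (csSup_le ⟨N, h1⟩ hub) (le_csSup ⟨N, hub⟩ h1)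

lemma dissNumOn_eq {V : Type*} (G : SimpleGraph V) (S : Set V) (N : ℕ)
    (h1 : ∃ F : Set V, F ⊆ S ∧ IsDissocSet G F ∧ F.ncard = N)
    (h2 : ∀ F : Set V, F ⊆ S → IsDissocSet G F → F.ncard ≤ N) : dissNumOn G S = N := by
  have hub : ∀ m ∈ {m | ∃ F : Set V, F ⊆ S ∧ IsDissocSet G F ∧ F.ncard = m}, m ≤ N := by
    rintro m ⟨F, hsub, hF, rfl⟩; exact h2 F hsub hF
  exact le_antisymm (csSup_le ⟨N, h1⟩ hub) (le_csSup ⟨N, hub⟩ h1)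

lemma diss_subset {V : Type*} {G : SimpleGraph V} {F F' : Set V} (hsub : F' ⊆ F)
    (hF : IsDissocSet G F) : IsDissocSet G F' := by
  intro u hu w hw w' hw' a a'
  exact hF u (hsub hu) w (hsub hw) w' (hsub hw') a a'

def consF (b : Bool) (c : Fin k → ℕ) : Set (Option (Σ i : Fin k, Fin (n i))) :=
  {x | (b = true ∧ x = none) ∨
    ∃ (i : Fin k) (j : Fin (n i)), x = some ⟨i, j⟩ ∧ (j : ℕ) % 3 ≠ c i}

lemma none_mem_consF {b : Bool} {c : Fin k → ℕ} : none ∈ consF (n := n) b c ↔ b = true := by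
  constructor
  · rintro (⟨hb, -⟩ | ⟨i, j, h, -⟩)
    · exact hb
    · exact absurd h (by simp)
  · intro h
    exact Or.inl ⟨h, rfl⟩

lemma some_mem_consF {b : Bool} {c : Fin k → ℕ} {i : Fin k} {j : Fin (n i)} :
    some ⟨i, j⟩ ∈ consF (n := n) b c ↔ (j : ℕ) % 3 ≠ c i := by
  constructor
  · rintro (⟨-, h⟩ | ⟨i', j', he, hne⟩)
    · exact absurd h (by simp)
    · obtain ⟨rfl, hv⟩ := some_eq_some_iff.1 he
      rwa [hv]
  · intro h
    exact Or.inr ⟨i, j, rfl, h⟩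

lemma consF_diss (b : Bool) (c : Fin k → ℕ) (hc : ∀ i, c i < 3)
    (hb1 : b = true → ∀ i i', c i ≠ 0 → c i' ≠ 0 → i = i')
    (hb2 : b = true → ∀ i, c i ≠ 0 → c i = 1) :
    IsDissocSet (spider k n) (consF b c) := by
  intro u hu w hw w' hw' a1 a2
  match u with
  | none =>
    obtain ⟨i1, j1, rfl, hv1⟩ := spider_adj_none' a1
    obtain ⟨i2, j2, rfl, hv2⟩ := spider_adj_none' a2
    have hb : b = true := by
      rcases hu with ⟨hb, -⟩ | ⟨i', j', h, -⟩
      · exact hb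
      · exact absurd h (by simp)
    have hc1 : c i1 ≠ 0 := by
      have := some_mem_consF.1 hw
      omega
    have hc2 : c i2 ≠ 0 := by
      have := some_mem_consF.1 hw'
      omega
    obtain rfl := hb1 hb i1 i2 hc1 hc2
    exact some_eq_some_iff.2 ⟨rfl, by omega⟩
  | some ⟨i, j⟩ =>
    have hu' : (j : ℕ) % 3 ≠ c i := some_mem_consF.1 hu
    match w, w' with
    | none, none => rfl
    | none, some ⟨i2, j2⟩ =>
      exfalso
      have hb : b = true := none_mem_consF.1 hw
      have hj0 : (j : ℕ) = 0 := spider_adj_none.1 a1.symm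
      have hci : c i ≠ 0 := by omega
      have hci1 : c i = 1 := hb2 hb i hci
      obtain ⟨rfl, hor⟩ := spider_adj_some.1 a2
      have hv2 : (j2 : ℕ) % 3 ≠ c i := some_mem_consF.1 hw'
      omega
    | some ⟨i2, j2⟩, none =>
      exfalso
      have hb : b = true := none_mem_consF.1 hw'
      have hj0 : (j : ℕ) = 0 := spider_adj_none.1 a2.symm
      have hci : c i ≠ 0 := by omega
      have hci1 : c i = 1 := hb2 hb i hci
      obtain ⟨rfl, hor⟩ := spider_adj_some.1 a1
      have hv2 : (j2 : ℕ) % 3 ≠ c i := some_mem_consF.1 hw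
      omega
    | some ⟨i1, j1⟩, some ⟨i2, j2⟩ =>
      obtain ⟨rfl, hor1⟩ := spider_adj_some.1 a1
      obtain ⟨rfl, hor2⟩ := spider_adj_some.1 a2
      have hv1 : (j1 : ℕ) % 3 ≠ c i := some_mem_consF.1 hw
      have hv2 : (j2 : ℕ) % 3 ≠ c i := some_mem_consF.1 hw'
      have hci := hc i
      exact some_eq_some_iff.2 ⟨rfl, by omega⟩

lemma Bset_consF (b : Bool) (c : Fin k → ℕ) (i : Fin k) :
    Bset (consF (n := n) b c) i = (Finset.range (n i)).filter (fun j => ¬ j % 3 = c i) := by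
  ext j
  simp only [mem_Bset, Finset.mem_filter, Finset.mem_range]
  constructor
  · rintro ⟨h, hm⟩
    exact ⟨h, some_mem_consF.1 hm⟩
  · rintro ⟨h, hm⟩
    exact ⟨h, some_mem_consF.2 hm⟩

lemma card_Bset_consF (b : Bool) (c : Fin k → ℕ) (i : Fin k)
    (hci : c i < 3) (hres : n i % 3 ≤ c i) :
    (Bset (consF (n := n) b c) i).card = fpath (n i) := by
  rw [Bset_consF]
  have h := Finset.card_filter_add_card_filter_not
    (s := Finset.range (n i)) (p := fun j => j % 3 = c i)
  have h2 := countMod (n i) (c i) hci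
  rw [Finset.card_range] at h
  unfold fpath
  split_ifs at h2 <;> omega

lemma bset_zero_unique {F : Set (Option (Σ i : Fin k, Fin (n i)))}
    (hF : IsDissocSet (spider k n) F) (hnone : none ∈ F) {i i' : Fin k}
    (h : 0 ∈ Bset F i) (h' : 0 ∈ Bset F i') : i = i' := by
  obtain ⟨hlt, hm⟩ := mem_Bset.1 h
  obtain ⟨hlt', hm'⟩ := mem_Bset.1 h'
  have a1 : (spider k n).Adj none (some ⟨i, ⟨0, hlt⟩⟩) := spider_adj_none.2 rfl
  have a2 : (spider k n).Adj none (some ⟨i', ⟨0, hlt'⟩⟩) := spider_adj_none.2 rfl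
  exact (some_eq_some_iff.1 (hF _ hnone _ hm _ hm' a1 a2)).1

lemma bset_zero_one {F : Set (Option (Σ i : Fin k, Fin (n i)))}
    (hF : IsDissocSet (spider k n) F) (hnone : none ∈ F) {i : Fin k}
    (h : 0 ∈ Bset F i) : 1 ∉ Bset F i := by
  intro h1
  obtain ⟨hlt, hm⟩ := mem_Bset.1 h
  obtain ⟨hlt1, hm1⟩ := mem_Bset.1 h1
  have a1 : (spider k n).Adj (some ⟨i, ⟨0, hlt⟩⟩) none := (spider_adj_none.2 rfl).symm
  have a2 : (spider k n).Adj (some ⟨i, ⟨0, hlt⟩⟩) (some ⟨i, ⟨1, hlt1⟩⟩) :=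
    spider_adj_some.2 ⟨rfl, Or.inl rfl⟩
  exact absurd (hF _ hm _ hnone _ hm1 a1 a2) (by simp)

lemma bset_bound_no_zero {F : Set (Option (Σ i : Fin k, Fin (n i)))}
    (hF : IsDissocSet (spider k n) F) {i : Fin k} (h0 : 0 ∉ Bset F i) :
    (Bset F i).card ≤ fpath (n i - 1) := by
  apply shiftBound 1 (n i)
  · intro a ha
    rcases Nat.eq_zero_or_pos a with rfl | h
    · exact absurd ha h0
    · exact h
  · exact Bset_lt
  · exact diss_noThree hF i

lemma bset_bound_zero {F : Set (Option (Σ i : Fin k, Fin (n i)))}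
    (hF : IsDissocSet (spider k n) F) (hnone : none ∈ F) {i : Fin k}
    (h0 : 0 ∈ Bset F i) : (Bset F i).card ≤ 1 + fpath (n i - 2) := by
  have h1 := bset_zero_one hF hnone h0
  have hsplit : ((Bset F i).filter (fun a => a < 2)).card
      + ((Bset F i).filter (fun a => ¬ a < 2)).card = (Bset F i).card :=
    Finset.card_filter_add_card_filter_not _
  have ha : ((Bset F i).filter (fun a => a < 2)).card ≤ 1 := by
    have hsub : (Bset F i).filter (fun a => a < 2) ⊆ {0} := by
      intro a hmem
      obtain ⟨hmem', hlt⟩ := Finset.mem_filter.1 hmem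
      simp only [Finset.mem_singleton]
      by_contra hne
      have : a = 1 := by omega
      subst this
      exact h1 hmem'
    calc ((Bset F i).filter (fun a => a < 2)).card ≤ ({0} : Finset ℕ).card :=
        Finset.card_le_card hsub
      _ = 1 := rfl
  have hb : ((Bset F i).filter (fun a => ¬ a < 2)).card ≤ fpath (n i - 2) := by
    apply shiftBound 2 (n i)
    · intro a hmem
      have := (Finset.mem_filter.1 hmem).2
      omega
    · intro a hmem
      exact Bset_lt a (Finset.mem_filter.1 hmem).1
    · intro j hj hj1 hj2
      exact diss_noThree hF i j (Finset.mem_filter.1 hj).1 (Finset.mem_filter.1 hj1).1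
        (Finset.mem_filter.1 hj2).1
  omega

lemma bset_bound {F : Set (Option (Σ i : Fin k, Fin (n i)))}
    (hF : IsDissocSet (spider k n) F) (i : Fin k) : (Bset F i).card ≤ fpath (n i) :=
  pathBound (n i) _ Bset_lt (diss_noThree hF i)

lemma none_not_mem_leg (i : Fin k) : (none : Option (Σ i : Fin k, Fin (n i))) ∉ legSet k n i := by
  rintro ⟨j, h⟩
  exact absurd h (by simp)

lemma some_mem_leg {i i' : Fin k} {j : Fin (n i')} :
    some ⟨i', j⟩ ∈ legSet k n i ↔ i' = i := by
  constructor
  · rintro ⟨j0, h⟩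
    exact (some_eq_some_iff.1 h).1
  · rintro rfl
    exact ⟨j, rfl⟩

lemma dissNumOn_leg (i : Fin k) :
    dissNumOn (spider k n) (legSet k n i) = fpath (n i) := by
  apply dissNumOn_eq
  · refine ⟨consF false (fun _ => 2) ∩ legSet k n i, Set.inter_subset_right, ?_, ?_⟩
    · exact diss_subset Set.inter_subset_left
        (consF_diss false _ (fun _ => by omega) (by simp) (by simp))
    · rw [ncard_split]
      have hnone : (none : Option (Σ i : Fin k, Fin (n i))) ∉
          consF false (fun _ => 2) ∩ legSet k n i :=
        fun h => none_not_mem_leg i h.2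
      rw [if_neg hnone, zero_add]
      have hBi : Bset (consF (n := n) false (fun _ => 2) ∩ legSet k n i) i
          = Bset (consF (n := n) false (fun _ => 2)) i := by
        ext j
        simp only [mem_Bset]
        constructor
        · rintro ⟨h, hm⟩; exact ⟨h, hm.1⟩
        · rintro ⟨h, hm⟩; exact ⟨h, hm, some_mem_leg.2 rfl⟩
      have hBo : ∀ i', i' ≠ i → Bset (consF (n := n) false (fun _ => 2) ∩ legSet k n i) i'
          = ∅ := by
        intro i' hne
        ext j
        simp only [mem_Bset, Finset.notMem_empty, iff_false]
        rintro ⟨h, hm⟩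
        exact hne (some_mem_leg.1 hm.2)
      rw [Finset.sum_eq_single i]
      · rw [hBi, card_Bset_consF false _ i (by omega) (by omega)]
      · intro i' _ hne
        rw [hBo i' hne, Finset.card_empty]
      · intro h
        exact absurd (Finset.mem_univ i) h
  · intro F hsub hF
    rw [ncard_split]
    have hnone : (none : Option (Σ i : Fin k, Fin (n i))) ∉ F :=
      fun h => none_not_mem_leg i (hsub h)
    rw [if_neg hnone, zero_add]
    have hBo : ∀ i', i' ≠ i → Bset F i' = ∅ := by
      intro i' hne
      ext j
      simp only [mem_Bset, Finset.notMem_empty, iff_false]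
      rintro ⟨h, hm⟩
      exact hne (some_mem_leg.1 (hsub hm))
    rw [Finset.sum_eq_single i]
    · exact bset_bound hF i
    · intro i' _ hne
      rw [hBo i' hne, Finset.card_empty]
    · intro h
      exact absurd (Finset.mem_univ i) h

theorem stmt5' (k : ℕ) (n : Fin k → ℕ) (hn : ∀ i, 1 ≤ n i) :
    (((Finset.univ.filter fun i => n i % 3 = 2).card = 0 ∧
        (Finset.univ.filter fun i => n i % 3 = 1).card ≤ 1) →
      dissNum (spider k n) = (∑ i, dissNumOn (spider k n) (legSet k n i)) + 1) ∧
    (¬ ((Finset.univ.filter fun i => n i % 3 = 2).card = 0 ∧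
        (Finset.univ.filter fun i => n i % 3 = 1).card ≤ 1) →
      dissNum (spider k n) = ∑ i, dissNumOn (spider k n) (legSet k n i)) := by
  have hsum : ∑ i, dissNumOn (spider k n) (legSet k n i) = ∑ i, fpath (n i) :=
    Finset.sum_congr rfl (fun i _ => dissNumOn_leg i)
  constructor
  · rintro ⟨h2c, h1c⟩
    rw [hsum]
    have hno2 : ∀ i, n i % 3 ≠ 2 := by
      intro i hi
      have : i ∈ Finset.univ.filter fun i => n i % 3 = 2 := by
        simp only [Finset.mem_filter, Finset.mem_univ, true_and]; exact hi
      rw [Finset.card_eq_zero.1 h2c] at this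
      exact absurd this (Finset.notMem_empty i)
    set c : Fin k → ℕ := fun i => if n i % 3 = 1 then 1 else 0 with hc
    have hcmem : ∀ i, c i ≠ 0 → n i % 3 = 1 := by
      intro i hi
      by_contra h
      simp only [hc, if_neg h] at hi
      exact hi rfl
    apply dissNum_eq
    · refine ⟨consF true c, consF_diss true c ?_ ?_ ?_, ?_⟩
      · intro i; simp only [hc]; split_ifs <;> omega
      · intro _ i i' hi hi'
        refine Finset.card_le_one.1 h1c i ?_ i' ?_ <;>
          simp only [Finset.mem_filter, Finset.mem_univ, true_and]
        · exact hcmem i hi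
        · exact hcmem i' hi'
      · intro _ i hi
        simp only [hc, if_pos (hcmem i hi)]
      · rw [ncard_split, if_pos (none_mem_consF.2 rfl)]
        rw [add_comm]
        congr 1
        apply Finset.sum_congr rfl
        intro i _
        apply card_Bset_consF true c i
        · simp only [hc]; split_ifs <;> omega
        · have := hno2 i
          simp only [hc]; split_ifs <;> omega
    · intro F hF
      rw [ncard_split]
      have hs := Finset.sum_le_sum (s := Finset.univ)
        (fun i (_ : i ∈ Finset.univ) => bset_bound hF i)
      split_ifs <;> omega
  · intro hbad
    rw [hsum]
    apply dissNum_eq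
    · refine ⟨consF false (fun _ => 2),
        consF_diss false _ (fun _ => by omega) (by simp) (by simp), ?_⟩
      rw [ncard_split, if_neg (by simp [none_mem_consF]), zero_add]
      apply Finset.sum_congr rfl
      intro i _
      exact card_Bset_consF false _ i (by omega) (by omega)
    · intro F hF
      rw [ncard_split]
      by_cases hnone : none ∈ F
      · rw [if_pos hnone]
        have key : ∃ i0, (Bset F i0).card + 1 ≤ fpath (n i0) := by
          rcases not_and_or.mp hbad with h2 | h1
          · obtain ⟨i2, hi2⟩ := Finset.card_pos.1 (Nat.pos_of_ne_zero h2)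
            have hmod : n i2 % 3 = 2 := (Finset.mem_filter.1 hi2).2
            by_cases h0 : 0 ∈ Bset F i2
            · have hb := bset_bound_zero hF hnone h0
              refine ⟨i2, ?_⟩
              unfold fpath at *
              omega
            · have hb := bset_bound_no_zero hF h0
              refine ⟨i2, ?_⟩
              unfold fpath at *
              omega
          · push_neg at h1
            obtain ⟨i1, hi1, i1', hi1', hne⟩ := Finset.one_lt_card.1 h1
            have hm1 : n i1 % 3 = 1 := (Finset.mem_filter.1 hi1).2
            have hm1' : n i1' % 3 = 1 := (Finset.mem_filter.1 hi1').2
            by_cases h0 : 0 ∈ Bset F i1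
            · have h0' : 0 ∉ Bset F i1' := fun h => hne (bset_zero_unique hF hnone h0 h)
              have hb := bset_bound_no_zero hF h0'
              have := hn i1'
              refine ⟨i1', ?_⟩
              unfold fpath at *
              omega
            · have hb := bset_bound_no_zero hF h0
              have := hn i1
              refine ⟨i1, ?_⟩
              unfold fpath at *
              omega
        obtain ⟨i0, hkey⟩ := key
        have hrest := Finset.sum_le_sum (s := Finset.univ.erase i0)
          (fun i (_ : i ∈ Finset.univ.erase i0) => bset_bound hF i)
        have e1 : (Bset F i0).card + ∑ i ∈ Finset.univ.erase i0, (Bset F i).card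
            = ∑ i, (Bset F i).card :=
          Finset.add_sum_erase Finset.univ (fun i => (Bset F i).card) (Finset.mem_univ i0)
        have e2 : fpath (n i0) + ∑ i ∈ Finset.univ.erase i0, fpath (n i)
            = ∑ i, fpath (n i) :=
          Finset.add_sum_erase Finset.univ (fun i => fpath (n i)) (Finset.mem_univ i0)
        omega
      · rw [if_neg hnone, zero_add]
        exact Finset.sum_le_sum (fun i _ => bset_bound hF i)

theorem stmt5 (k : ℕ) (n : Fin k → ℕ) (hn : ∀ i, 1 ≤ n i) :
    (((Finset.univ.filter fun i => n i % 3 = 2).card = 0 ∧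
        (Finset.univ.filter fun i => n i % 3 = 1).card ≤ 1) →
      dissNum (spider k n) = (∑ i, dissNumOn (spider k n) (legSet k n i)) + 1) ∧
    (¬ ((Finset.univ.filter fun i => n i % 3 = 2).card = 0 ∧
        (Finset.univ.filter fun i => n i % 3 = 1).card ≤ 1) →
      dissNum (spider k n) = ∑ i, dissNumOn (spider k n) (legSet k n i)) := by
  exact stmt5' k n hn
end

section
/- Let T be a tree rooted at v with every vertex other than v of degree at most 2 (a spider with center v). Then v belongs to every maximum dissociation set of T if and only if |C^2(v)| = 0 and |C^1(v)| ≤ 1, where C^i(v) is the set of children w of v whose pendant path T_w has order ≡ i (mod 3). -/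
open scoped Classical

namespace SpiderAux
def f (m : ℕ) : ℕ := 2 * (m / 3) + m % 3

lemma count_mod3 (r m : ℕ) (hr : r < 3) :
    ((Finset.range m).filter (fun j => j % 3 = r)).card = (m + 2 - r) / 3 := by
  induction m with
  | zero => simp; omega
  | succ m ih =>
    rw [Finset.range_add_one, Finset.filter_insert]
    split
    · rw [Finset.card_insert_of_notMem (by simp), ih]; omega
    · rw [ih]; omega

lemma count_ne (r m : ℕ) (hr : r < 3) :
    ((Finset.range m).filter (fun j => j % 3 ≠ r)).card = m - (m + 2 - r) / 3 := by
  simp only [ne_eq, Finset.filter_not, Finset.card_sdiff_of_subset (Finset.filter_subset _ _),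
    Finset.card_range, count_mod3 r m hr]

lemma count_le (P : ℕ → Prop)
    (h : ∀ j, P j → P (j+1) → P (j+2) → False) :
    ∀ m, ((Finset.range m).filter (fun j => P j)).card ≤ f m := by
  intro m
  induction m using Nat.strong_induction_on with
  | _ m ih =>
    match m with
    | 0 => simp [f]
    | 1 => exact le_trans (Finset.card_filter_le _ _) (by simp [f])
    | 2 => exact le_trans (Finset.card_filter_le _ _) (by simp [f])
    | (m+3) =>
      have hsplit : Finset.range (m+3) = Finset.range m ∪ Finset.Ico m (m+3) := by
        rw [Finset.range_eq_Ico, ← Finset.Ico_union_Ico_eq_Ico (Nat.zero_le m) (by omega),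
          ← Finset.range_eq_Ico]
        
      have h2 : ((Finset.Ico m (m+3)).filter (fun j => P j)).card ≤ 2 := by
        by_contra h3
        push_neg at h3
        have hsub := Finset.filter_subset (fun j => P j) (Finset.Ico m (m+3))
        have hcard : (Finset.Ico m (m+3)).card = 3 := by rw [Nat.card_Ico]; omega
        have heq : (Finset.Ico m (m+3)).filter (fun j => P j) = Finset.Ico m (m+3) :=
          Finset.eq_of_subset_of_card_le hsub (by omega)
        have hm : ∀ x, m ≤ x → x < m + 3 → P x := by
          intro x hx1 hx2
          have : x ∈ (Finset.Ico m (m+3)).filter (fun j => P j) := by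
            rw [heq]; exact Finset.mem_Ico.mpr ⟨hx1, hx2⟩
          exact (Finset.mem_filter.mp this).2
        exact h m (hm m le_rfl (by omega)) (hm (m+1) (by omega) (by omega))
          (hm (m+2) (by omega) (by omega))
      have h1 := ih m (by omega)
      have hle := Finset.card_union_le ((Finset.range m).filter (fun j => P j))
        ((Finset.Ico m (m+3)).filter (fun j => P j))
      rw [← Finset.filter_union, ← hsplit] at hle
      have hf : f (m+3) = f m + 2 := by simp only [f]; omega
      omega

lemma count_le_Ico (P : ℕ → Prop)
    (h : ∀ j, P j → P (j+1) → P (j+2) → False) (s m : ℕ) :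
    ((Finset.Ico s m).filter (fun j => P j)).card ≤ f (m - s) := by
  rcases le_or_gt s m with hsm | hsm
  · have hIco : Finset.Ico s m = (Finset.Ico 0 (m-s)).map (addLeftEmbedding s) := by
      rw [Finset.map_add_left_Ico]
      congr 1 <;> omega
    rw [hIco, Finset.filter_map, Finset.card_map, ← Finset.range_eq_Ico]
    have := count_le (fun j => P (s + j)) (fun j h1 h2 h3 => by
      refine h (s + j) h1 ?_ ?_
      · rw [Nat.add_assoc]; exact h2
      · rw [Nat.add_assoc]; exact h3) (m - s)
    convert this using 2
    exact congrArg (fun d => @Finset.filter _ _ d _) (Subsingleton.elim _ _)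
  · rw [Finset.Ico_eq_empty (by omega)]
    simp

variable {k : ℕ} {n : Fin k → ℕ}

lemma some_inj {i i' : Fin k} {j : Fin (n i)} {j' : Fin (n i')}
    (h : (some ⟨i,j⟩ : Option (Σ i, Fin (n i))) = some ⟨i',j'⟩) :
    i = i' ∧ (j:ℕ) = (j':ℕ) := by
  injection h with h
  obtain ⟨h1, h2⟩ := Sigma.mk.inj_iff.mp h
  subst h1
  rw [heq_iff_eq] at h2
  exact ⟨rfl, by rw [h2]⟩

lemma some_eq_of {i : Fin k} {j j' : Fin (n i)} (h : (j:ℕ) = (j':ℕ)) :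
    (some ⟨i,j⟩ : Option (Σ i, Fin (n i))) = some ⟨i,j'⟩ := by
  rw [Fin.ext h]

lemma adj_none_some (i : Fin k) (j : Fin (n i)) (h : (j:ℕ) = 0) :
    (spider k n).Adj none (some ⟨i, j⟩) := by
  rw [spider, SimpleGraph.fromRel_adj]
  refine ⟨by simp, Or.inl (Or.inl ⟨rfl, i, j.isLt.trans_le' (by omega), ?_⟩)⟩
  exact some_eq_of h

lemma adj_succ (i : Fin k) (j j' : Fin (n i)) (h : (j':ℕ) = (j:ℕ) + 1) :
    (spider k n).Adj (some ⟨i,j⟩) (some ⟨i,j'⟩) := by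
  rw [spider, SimpleGraph.fromRel_adj]
  refine ⟨fun hc => by have := (some_inj hc).2; omega, Or.inl (Or.inr ⟨i, j, j', rfl, rfl, h⟩)⟩

lemma adj_cases {x y : Option (Σ i : Fin k, Fin (n i))} (h : (spider k n).Adj x y) :
    (∃ (i : Fin k) (j : Fin (n i)), (j:ℕ) = 0 ∧ ((x = none ∧ y = some ⟨i,j⟩) ∨ (y = none ∧ x = some ⟨i,j⟩))) ∨
    (∃ (i : Fin k) (j j' : Fin (n i)), x = some ⟨i,j⟩ ∧ y = some ⟨i,j'⟩ ∧
      ((j':ℕ) = (j:ℕ) + 1 ∨ (j:ℕ) = (j':ℕ) + 1)) := by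
  rw [spider, SimpleGraph.fromRel_adj] at h
  obtain ⟨hne, h | h⟩ := h <;>
    rcases h with ⟨hx, i, hi, hy⟩ | ⟨i, j, j', hx, hy, hjj⟩
  · exact Or.inl ⟨i, ⟨0, hi⟩, rfl, Or.inl ⟨hx, hy⟩⟩
  · exact Or.inr ⟨i, j, j', hx, hy, Or.inl hjj⟩
  · exact Or.inl ⟨i, ⟨0, hi⟩, rfl, Or.inr ⟨hx, hy⟩⟩
  · exact Or.inr ⟨i, j', j, hy, hx, Or.inr hjj⟩

lemma adj_some_some {i i' : Fin k} {j : Fin (n i)} {j' : Fin (n i')}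
    (h : (spider k n).Adj (some ⟨i,j⟩) (some ⟨i',j'⟩)) :
    i = i' ∧ ((j':ℕ) = (j:ℕ) + 1 ∨ (j:ℕ) = (j':ℕ) + 1) := by
  rcases adj_cases h with ⟨i1, j1, hj1, ⟨hx, _⟩ | ⟨hy, _⟩⟩ | ⟨i1, j1, j1', hx, hy, hjj⟩
  · exact absurd hx (by simp)
  · exact absurd hy (by simp)
  · obtain ⟨rfl, h1⟩ := some_inj hx
    obtain ⟨rfl, h2⟩ := some_inj hy
    exact ⟨rfl, by omega⟩

lemma adj_some_none {i : Fin k} {j : Fin (n i)}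
    (h : (spider k n).Adj (some ⟨i,j⟩) none) : (j:ℕ) = 0 := by
  rcases adj_cases h with ⟨i1, j1, hj1, ⟨hx, _⟩ | ⟨_, hx⟩⟩ | ⟨i1, j1, j1', _, hy, _⟩
  · exact absurd hx (by simp)
  · obtain ⟨rfl, h1⟩ := some_inj hx
    omega
  · exact absurd hy (by simp)

lemma ncard_decomp (F : Set (Option (Σ i : Fin k, Fin (n i)))) :
    F.ncard = (if none ∈ F then 1 else 0)
      + ∑ i : Fin k, ((Finset.range (n i)).filter
          (fun j => ∃ h : j < n i, some ⟨i, ⟨j, h⟩⟩ ∈ F)).card := by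
  classical
  rw [Set.ncard_eq_toFinset_card']
  have h1 : F.toFinset = Finset.univ.filter (· ∈ F) := by ext x; simp
  rw [h1, Finset.card_filter]
  rw [Fintype.sum_option]
  congr 1
  rw [← Finset.univ_sigma_univ, Finset.sum_sigma]
  apply Finset.sum_congr rfl
  intro i _
  have h2 : ∀ j : Fin (n i), (if some ⟨i, j⟩ ∈ F then 1 else 0)
      = (fun m : ℕ => if (∃ h : m < n i, some ⟨i, ⟨m, h⟩⟩ ∈ F) then 1 else 0) (j : ℕ) := by
    intro j
    simp only []
    congr 1
    simp only [eq_iff_iff]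
    constructor
    · intro hj; exact ⟨j.isLt, by rwa [Fin.eta]⟩
    · rintro ⟨h, hj⟩; rwa [Fin.eta] at hj
  calc ∑ j : Fin (n i), (if some ⟨i, j⟩ ∈ F then 1 else 0)
      = ∑ j : Fin (n i), (fun m : ℕ => if (∃ h : m < n i, some ⟨i, ⟨m, h⟩⟩ ∈ F) then 1 else 0) (j:ℕ) :=
        Finset.sum_congr rfl (fun j _ => h2 j)
    _ = ∑ m ∈ Finset.range (n i), (if (∃ h : m < n i, some ⟨i, ⟨m, h⟩⟩ ∈ F) then 1 else 0) :=
        by exact Fin.sum_univ_eq_sum_range (fun m => if (∃ h : m < n i, some ⟨i, ⟨m, h⟩⟩ ∈ F) then 1 else 0) (n i)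
    _ = ((Finset.range (n i)).filter (fun j => ∃ h : j < n i, some ⟨i, ⟨j, h⟩⟩ ∈ F)).card :=
        (Finset.card_filter _ _).symm


variable {F : Set (Option (Σ i : Fin k, Fin (n i)))}

lemma filter_inst {α : Type*} {p : α → Prop} (h1 h2 : DecidablePred p) (s : Finset α) :
    @Finset.filter α p h1 s = @Finset.filter α p h2 s := by
  have h : h1 = h2 := Subsingleton.elim _ _
  rw [h]

lemma no3 (hF : IsDissocSet (spider k n) F) (i : Fin k) :
    ∀ j : ℕ, (∃ h : j < n i, some ⟨i,⟨j,h⟩⟩ ∈ F) → (∃ h : j+1 < n i, some ⟨i,⟨j+1,h⟩⟩ ∈ F) →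
      (∃ h : j+2 < n i, some ⟨i,⟨j+2,h⟩⟩ ∈ F) → False := by
  rintro j ⟨h0, m0⟩ ⟨h1, m1⟩ ⟨h2, m2⟩
  have a1 : (spider k n).Adj (some ⟨i,⟨j+1,h1⟩⟩) (some ⟨i,⟨j,h0⟩⟩) :=
    (adj_succ i ⟨j,h0⟩ ⟨j+1,h1⟩ rfl).symm
  have a2 : (spider k n).Adj (some ⟨i,⟨j+1,h1⟩⟩) (some ⟨i,⟨j+2,h2⟩⟩) :=
    adj_succ i ⟨j+1,h1⟩ ⟨j+2,h2⟩ rfl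
  have heq := hF _ m1 _ m0 _ m2 a1 a2
  have := (some_inj heq).2
  simp at this

lemma card_le_of_not_mem (hF : IsDissocSet (spider k n) F) (hnone : none ∉ F) :
    F.ncard ≤ ∑ i : Fin k, f (n i) := by
  rw [ncard_decomp F, if_neg hnone, Nat.zero_add]
  refine Finset.sum_le_sum fun i _ => ?_
  convert count_le (fun j => ∃ h : j < n i, some ⟨i,⟨j,h⟩⟩ ∈ F) (no3 hF i) (n i) using 2
  rfl
  exact filter_inst _ _ _

lemma arith1 (m : ℕ) (hm : 1 ≤ m) :
    1 + f (m - 2) ≤ f (m - 1) + (if m % 3 = 1 then 1 else 0) := by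
  simp only [f]; split_ifs <;> omega

lemma card_le_of_mem (hF : IsDissocSet (spider k n) F) (hnone : none ∈ F)
    (hn : ∀ i, 1 ≤ n i)
    (hab : 1 ≤ (Finset.univ.filter fun i : Fin k => n i % 3 = 2).card ∨
           2 ≤ (Finset.univ.filter fun i : Fin k => n i % 3 = 1).card) :
    F.ncard ≤ ∑ i : Fin k, f (n i) := by
  classical
  have hone : ∀ i i' : Fin k, (∃ h : (0:ℕ) < n i, some ⟨i,⟨0,h⟩⟩ ∈ F) →
      (∃ h : (0:ℕ) < n i', some ⟨i',⟨0,h⟩⟩ ∈ F) → i = i' := by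
    rintro i i' ⟨h0, m0⟩ ⟨h0', m0'⟩
    have heq := hF none hnone _ m0 _ m0' (adj_none_some i ⟨0,h0⟩ rfl)
      (adj_none_some i' ⟨0,h0'⟩ rfl)
    exact (some_inj heq).1
  have hno1 : ∀ i : Fin k, (∃ h : (0:ℕ) < n i, some ⟨i,⟨0,h⟩⟩ ∈ F) →
      ¬ (∃ h : (1:ℕ) < n i, some ⟨i,⟨1,h⟩⟩ ∈ F) := by
    rintro i ⟨h0, m0⟩ ⟨h1, m1⟩
    have heq := hF _ m0 _ hnone _ m1 (adj_none_some i ⟨0,h0⟩ rfl).symm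
      (adj_succ i ⟨0,h0⟩ ⟨1,h1⟩ rfl)
    simp at heq
  have hleg : ∀ i : Fin k,
      ((Finset.range (n i)).filter (fun j => ∃ h : j < n i, some ⟨i,⟨j,h⟩⟩ ∈ F)).card
        ≤ f (n i - 1) + (if (∃ h : (0:ℕ) < n i, some ⟨i,⟨0,h⟩⟩ ∈ F) ∧ n i % 3 = 1
            then 1 else 0) := by
    intro i
    by_cases h0 : ∃ h : (0:ℕ) < n i, some ⟨i,⟨0,h⟩⟩ ∈ F
    · have hno1' := hno1 i h0
      have heq : (Finset.range (n i)).filter (fun j => ∃ h : j < n i, some ⟨i,⟨j,h⟩⟩ ∈ F)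
          = insert 0 ((Finset.Ico 2 (n i)).filter
              (fun j => ∃ h : j < n i, some ⟨i,⟨j,h⟩⟩ ∈ F)) := by
        ext j
        simp only [Finset.mem_filter, Finset.mem_range, Finset.mem_Ico, Finset.mem_insert]
        constructor
        · rintro ⟨hj, hP⟩
          match j with
          | 0 => exact Or.inl rfl
          | 1 => exact absurd hP hno1'
          | (j+2) => exact Or.inr ⟨⟨by omega, hj⟩, hP⟩
        · rintro (rfl | ⟨⟨h2, hj⟩, hP⟩)
          · exact ⟨hn i, h0⟩
          · exact ⟨hj, hP⟩
      rw [heq]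
      calc (insert 0 ((Finset.Ico 2 (n i)).filter
              (fun j => ∃ h : j < n i, some ⟨i,⟨j,h⟩⟩ ∈ F))).card
          ≤ ((Finset.Ico 2 (n i)).filter
              (fun j => ∃ h : j < n i, some ⟨i,⟨j,h⟩⟩ ∈ F)).card + 1 :=
            Finset.card_insert_le _ _
        _ ≤ f (n i - 2) + 1 := by
            refine Nat.add_le_add_right ?_ 1
            convert count_le_Ico (fun j => ∃ h : j < n i, some ⟨i,⟨j,h⟩⟩ ∈ F)
              (no3 hF i) 2 (n i) using 2
            exact filter_inst _ _ _
        _ ≤ f (n i - 1) + (if n i % 3 = 1 then 1 else 0) := by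
            have := arith1 (n i) (hn i); omega
        _ ≤ f (n i - 1) + (if (∃ h : (0:ℕ) < n i, some ⟨i,⟨0,h⟩⟩ ∈ F) ∧ n i % 3 = 1
              then 1 else 0) := by
            split_ifs with hc1 hc2 <;> simp_all
    · have heq : (Finset.range (n i)).filter (fun j => ∃ h : j < n i, some ⟨i,⟨j,h⟩⟩ ∈ F)
          = (Finset.Ico 1 (n i)).filter (fun j => ∃ h : j < n i, some ⟨i,⟨j,h⟩⟩ ∈ F) := by
        ext j
        simp only [Finset.mem_filter, Finset.mem_range, Finset.mem_Ico]
        constructor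
        · rintro ⟨hj, hP⟩
          match j with
          | 0 => exact absurd hP h0
          | (j+1) => exact ⟨⟨by omega, hj⟩, hP⟩
        · rintro ⟨⟨_, hj⟩, hP⟩; exact ⟨hj, hP⟩
      rw [heq]
      refine le_trans ?_ (Nat.le_add_right _ _)
      convert count_le_Ico (fun j => ∃ h : j < n i, some ⟨i,⟨j,h⟩⟩ ∈ F)
        (no3 hF i) 1 (n i) using 2
      rfl
      exact filter_inst _ _ _
  have hsum_e : ∑ i : Fin k,
      (if (∃ h : (0:ℕ) < n i, some ⟨i,⟨0,h⟩⟩ ∈ F) ∧ n i % 3 = 1 then 1 else 0)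
      = (Finset.univ.filter fun i : Fin k =>
          (∃ h : (0:ℕ) < n i, some ⟨i,⟨0,h⟩⟩ ∈ F) ∧ n i % 3 = 1).card :=
    (Finset.card_filter _ _).symm
  have he1 : (Finset.univ.filter fun i : Fin k =>
      (∃ h : (0:ℕ) < n i, some ⟨i,⟨0,h⟩⟩ ∈ F) ∧ n i % 3 = 1).card ≤ 1 := by
    apply Finset.card_le_one.mpr
    intro x hx y hy
    rw [Finset.mem_filter] at hx hy
    exact hone x y hx.2.1 hy.2.1
  have hea : (Finset.univ.filter fun i : Fin k =>
      (∃ h : (0:ℕ) < n i, some ⟨i,⟨0,h⟩⟩ ∈ F) ∧ n i % 3 = 1).card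
      ≤ (Finset.univ.filter fun i : Fin k => n i % 3 = 1).card := by
    apply Finset.card_le_card
    exact Finset.monotone_filter_right _ (fun x _ hx => hx.2)
  have hfn : ∀ i : Fin k, f (n i) = f (n i - 1) + ((if n i % 3 = 1 then 1 else 0)
      + (if n i % 3 = 2 then 1 else 0)) := by
    intro i
    have := hn i
    simp only [f]; split_ifs <;> omega
  have hsumA : ∑ i : Fin k, (if n i % 3 = 1 then 1 else 0)
      = (Finset.univ.filter fun i : Fin k => n i % 3 = 1).card := (Finset.card_filter _ _).symm
  have hsumB : ∑ i : Fin k, (if n i % 3 = 2 then 1 else 0)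
      = (Finset.univ.filter fun i : Fin k => n i % 3 = 2).card := (Finset.card_filter _ _).symm
  have hS : ∑ i : Fin k, f (n i) = ∑ i : Fin k, f (n i - 1)
      + ((Finset.univ.filter fun i : Fin k => n i % 3 = 1).card
        + (Finset.univ.filter fun i : Fin k => n i % 3 = 2).card) := by
    rw [← hsumA, ← hsumB, ← Finset.sum_add_distrib, ← Finset.sum_add_distrib]
    exact Finset.sum_congr rfl fun i _ => hfn i
  rw [ncard_decomp F, if_pos hnone]
  have htot := Finset.sum_le_sum (fun i (_ : i ∈ Finset.univ) => hleg i)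
  rw [Finset.sum_add_distrib] at htot
  omega


def F0set (k : ℕ) (n : Fin k → ℕ) : Set (Option (Σ i : Fin k, Fin (n i))) :=
  {x | ∃ (i : Fin k) (j : Fin (n i)), x = some ⟨i,j⟩ ∧ (j:ℕ) % 3 ≠ 2}

def F1set (k : ℕ) (n : Fin k → ℕ) : Set (Option (Σ i : Fin k, Fin (n i))) :=
  {x | x = none ∨ ∃ (i : Fin k) (j : Fin (n i)), x = some ⟨i,j⟩ ∧
    (j:ℕ) % 3 ≠ (if n i % 3 = 1 then 1 else 0)}

lemma count_ne2 (m : ℕ) : ((Finset.range m).filter (fun j => j % 3 ≠ 2)).card = f m := by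
  rw [count_ne 2 m (by omega)]; simp only [f]; omega

lemma count_pat (m : ℕ) (hm : m % 3 ≠ 2) :
    ((Finset.range m).filter (fun j => j % 3 ≠ (if m % 3 = 1 then 1 else 0))).card = f m := by
  by_cases h1 : m % 3 = 1
  · simp only [if_pos h1]; rw [count_ne 1 m (by omega)]; simp only [f]; omega
  · simp only [if_neg h1]; rw [count_ne 0 m (by omega)]; simp only [f]; omega

lemma adj_of_none {y : Option (Σ i : Fin k, Fin (n i))} (h : (spider k n).Adj none y) :
    ∃ (i : Fin k) (j : Fin (n i)), (j:ℕ) = 0 ∧ y = some ⟨i,j⟩ := by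
  rcases adj_cases h with ⟨i, j, hj, ⟨_, hy⟩ | ⟨_, hx⟩⟩ | ⟨i, j, j', hx, _, _⟩
  · exact ⟨i, j, hj, hy⟩
  · exact absurd hx.symm (by simp)
  · exact absurd hx.symm (by simp)

lemma F0_none : none ∉ F0set k n := by
  rintro ⟨i, j, h, -⟩; exact absurd h (by simp)

lemma F0_card : (F0set k n).ncard = ∑ i : Fin k, f (n i) := by
  rw [ncard_decomp (F0set k n), if_neg F0_none, Nat.zero_add]
  refine Finset.sum_congr rfl fun i _ => ?_
  have heq : (Finset.range (n i)).filter
        (fun j => ∃ h : j < n i, some ⟨i,⟨j,h⟩⟩ ∈ F0set k n)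
      = (Finset.range (n i)).filter (fun j => j % 3 ≠ 2) := by
    ext j
    simp only [Finset.mem_filter, Finset.mem_range]
    constructor
    · rintro ⟨hj, h, i', j', hx, hmod⟩
      obtain ⟨he, hv⟩ := some_inj hx
      refine ⟨hj, ?_⟩
      simp only [] at hv
      omega
    · rintro ⟨hj, hmod⟩
      exact ⟨hj, hj, i, ⟨j, hj⟩, rfl, hmod⟩
  rw [heq, count_ne2]

lemma F0_dissoc : IsDissocSet (spider k n) (F0set k n) := by
  rintro u ⟨i, j, rfl, hj⟩ w hw w' hw' a1 a2
  obtain ⟨i1, j1, rfl, hj1⟩ := hw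
  obtain ⟨i2, j2, rfl, hj2⟩ := hw'
  obtain ⟨rfl, hv1⟩ := adj_some_some a1
  obtain ⟨rfl, hv2⟩ := adj_some_some a2
  exact some_eq_of (by omega)

lemma F1_none : none ∈ F1set k n := Or.inl rfl

lemma F1_card (hb : (Finset.univ.filter fun i : Fin k => n i % 3 = 2).card = 0) :
    (F1set k n).ncard = (∑ i : Fin k, f (n i)) + 1 := by
  have hb' : ∀ i : Fin k, n i % 3 ≠ 2 := by
    intro i hi
    have h1 := Finset.card_eq_zero.mp hb
    have h2 : i ∈ (Finset.univ.filter fun i : Fin k => n i % 3 = 2) :=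
      Finset.mem_filter.mpr ⟨Finset.mem_univ _, hi⟩
    simp_all
  rw [ncard_decomp (F1set k n), if_pos F1_none]
  rw [Nat.add_comm]
  congr 1
  refine Finset.sum_congr rfl fun i _ => ?_
  have heq : (Finset.range (n i)).filter
        (fun j => ∃ h : j < n i, some ⟨i,⟨j,h⟩⟩ ∈ F1set k n)
      = (Finset.range (n i)).filter (fun j => j % 3 ≠ (if n i % 3 = 1 then 1 else 0)) := by
    ext j
    simp only [Finset.mem_filter, Finset.mem_range]
    constructor
    · rintro ⟨hj, h, hmem⟩
      rcases hmem with hx | ⟨i', j', hx, hmod⟩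
      · exact absurd hx (by simp)
      · obtain ⟨he, hv⟩ := some_inj hx
        subst he
        refine ⟨hj, ?_⟩
        simp only [] at hv
        omega
    · rintro ⟨hj, hmod⟩
      exact ⟨hj, hj, Or.inr ⟨i, ⟨j, hj⟩, rfl, hmod⟩⟩
  rw [heq, count_pat (n i) (hb' i)]

lemma F1_dissoc (ha : (Finset.univ.filter fun i : Fin k => n i % 3 = 1).card ≤ 1) :
    IsDissocSet (spider k n) (F1set k n) := by
  intro u hu w hw w' hw' a1 a2
  rcases hu with rfl | ⟨i, j, rfl, hj⟩
  · -- u = none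
    obtain ⟨iw, jw, hjw0, rfl⟩ := adj_of_none a1
    obtain ⟨iw', jw', hjw0', rfl⟩ := adj_of_none a2
    have hw2 : n iw % 3 = 1 := by
      rcases hw with h | ⟨i1, j1, heq, hp⟩
      · exact absurd h (by simp)
      · obtain ⟨he, hv⟩ := some_inj heq
        subst he
        by_contra hcon
        rw [if_neg hcon] at hp
        omega
    have hw2' : n iw' % 3 = 1 := by
      rcases hw' with h | ⟨i1, j1, heq, hp⟩
      · exact absurd h (by simp)
      · obtain ⟨he, hv⟩ := some_inj heq
        subst he
        by_contra hcon
        rw [if_neg hcon] at hp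
        omega
    have hii : iw = iw' := Finset.card_le_one.mp ha iw
      (Finset.mem_filter.mpr ⟨Finset.mem_univ _, hw2⟩) iw'
      (Finset.mem_filter.mpr ⟨Finset.mem_univ _, hw2'⟩)
    subst hii
    exact some_eq_of (by omega)
  · -- u = some ⟨i, j⟩
    have hr : (if n i % 3 = 1 then 1 else 0) = 0 ∨ (if n i % 3 = 1 then 1 else 0) = 1 := by
      by_cases h : n i % 3 = 1 <;> simp [h]
    rcases hw with rfl | ⟨i1, j1, rfl, hp1⟩
    · rcases hw' with rfl | ⟨i2, j2, rfl, hp2⟩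
      · rfl
      · have hjz := adj_some_none a1
        obtain ⟨rfl, hv2⟩ := adj_some_some a2
        omega
    · rcases hw' with rfl | ⟨i2, j2, rfl, hp2⟩
      · have hjz := adj_some_none a2
        obtain ⟨rfl, hv1⟩ := adj_some_some a1
        omega
      · obtain ⟨rfl, hv1⟩ := adj_some_some a1
        obtain ⟨rfl, hv2⟩ := adj_some_some a2
        exact some_eq_of (by omega)

end SpiderAux

theorem stmt7 (k : ℕ) (n : Fin k → ℕ) (hn : ∀ i, 1 ≤ n i) :
    (∀ F, IsMaxDissocSet (spider k n) F → none ∈ F) ↔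
      ((Finset.univ.filter fun i => n i % 3 = 2).card = 0 ∧
        (Finset.univ.filter fun i => n i % 3 = 1).card ≤ 1) := by
  classical
  constructor
  · intro H
    by_contra hc
    have hab : 1 ≤ (Finset.univ.filter fun i : Fin k => n i % 3 = 2).card ∨
        2 ≤ (Finset.univ.filter fun i : Fin k => n i % 3 = 1).card := by
      by_cases hb : (Finset.univ.filter fun i : Fin k => n i % 3 = 2).card = 0
      · refine Or.inr ?_
        by_contra h2
        exact hc ⟨hb, by omega⟩
      · exact Or.inl (by omega)
    have hmax : IsMaxDissocSet (spider k n) (SpiderAux.F0set k n) := by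
      constructor
      · exact SpiderAux.F0_dissoc
      · intro F' hF'
        rw [SpiderAux.F0_card]
        by_cases hn' : none ∈ F'
        · exact SpiderAux.card_le_of_mem hF' hn' hn hab
        · exact SpiderAux.card_le_of_not_mem hF' hn'
    exact SpiderAux.F0_none (H _ hmax)
  · rintro ⟨hb, ha⟩ F hF
    by_contra hv
    have h1 := SpiderAux.card_le_of_not_mem hF.1 hv
    have h2 := SpiderAux.F1_card (k := k) (n := n) hb
    have h3 := hF.2 (SpiderAux.F1set k n) (SpiderAux.F1_dissoc ha)
    omega
end

section
/- Let T be a tree rooted at v, let u ≠ v be a branch vertex (degree ≥ 3) of T at maximum distance from v, and suppose |C^2(u)| ≥ 1 or |C^1(u)| ≥ 2 (where C^i(u) counts children w of u with the path subtree T_w of order ≡ i mod 3). Let T' = T − D[u] be the tree obtained by deleting u and all its descendants. Then for every maximum dissociation set F' of T' and any choice of maximum dissociation sets F_w of each T_w (w a child of u), the set F' ∪ ⋃_w F_w is a maximum dissociation set of T. -/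
open scoped Classical

/-- `D[u]`: in the tree `G` rooted at `v`, the set of `u` together with all its descendants,
i.e. the vertices `x` such that `u` lies on the (unique) path from `v` to `x`. -/
def descCl {V : Type*} (G : SimpleGraph V) (v u : V) : Set V :=
  {x | G.dist v x = G.dist v u + G.dist u x}

/-- `w` is a child of `u` in the tree `G` rooted at `v`. -/
def IsChild {V : Type*} (G : SimpleGraph V) (v u w : V) : Prop :=
  G.Adj u w ∧ G.dist v w = G.dist v u + 1

/-- `u` is a branch vertex of `G` (degree at least 3). -/
def IsBranch {V : Type*} (G : SimpleGraph V) (u : V) : Prop :=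
  3 ≤ (G.neighborSet u).ncard

/-- The set `C^i(u)` of children `w` of `u` whose subtree `T_w` has order ≡ i (mod 3). -/
def childMod {V : Type*} (G : SimpleGraph V) (v u : V) (i : ℕ) : Set V :=
  {w | IsChild G v u w ∧ (descCl G v w).ncard % 3 = i}

namespace Stmt10Aux
open SimpleGraph Walk

variable {V : Type*} {G : SimpleGraph V} {v x y z t w : V}

/-- In a tree every path realizes the distance. -/
lemma path_length_eq (hG : G.IsTree) {x y : V} {p : G.Walk x y} (hp : p.IsPath) :
    p.length = G.dist x y := by
  obtain ⟨q, hq, hql⟩ := hG.isConnected.exists_path_of_dist x y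
  obtain ⟨r, hr, hun⟩ := hG.existsUnique_path x y
  rw [← hql, hun p hp, hun q hq]

/-- Splitting a shortest walk at an interior vertex. -/
lemma dist_split (hG : G.IsTree) {x z : V} {p : G.Walk x z} (hlen : p.length = G.dist x z)
    {y : V} (hy : y ∈ p.support) :
    G.dist x y + G.dist y z = G.dist x z ∧ (p.takeUntil y hy).length = G.dist x y ∧
      (p.dropUntil y hy).length = G.dist y z := by
  have h1 : G.dist x y ≤ (p.takeUntil y hy).length := G.dist_le _
  have h2 : G.dist y z ≤ (p.dropUntil y hy).length := G.dist_le _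
  have h3 : (p.takeUntil y hy).length + (p.dropUntil y hy).length = p.length := by
    have := congrArg Walk.length (p.take_spec hy)
    rwa [Walk.length_append] at this
  have h4 : G.dist x z ≤ G.dist x y + G.dist y z := hG.isConnected.dist_triangle
  omega

lemma dist_adj (hG : G.IsTree) (h : G.Adj x y) : G.dist x y = 1 := by
  refine le_antisymm ?_ ?_
  · simpa using G.dist_le (Walk.cons h Walk.nil)
  · exact hG.isConnected.pos_dist_of_ne h.ne

/-- Every path from `v` to `x` passes through any `t` with
`dist v x = dist v t + dist t x`. -/
lemma mem_support_of_dist_eq (hG : G.IsTree) (ht : G.dist v x = G.dist v t + G.dist t x)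
    {p : G.Walk v x} (hp : p.IsPath) : t ∈ p.support := by
  obtain ⟨q, hq, hql⟩ := hG.isConnected.exists_path_of_dist v t
  obtain ⟨r, hr, hrl⟩ := hG.isConnected.exists_path_of_dist t x
  have hlen : (q.append r).length = G.dist v x := by
    rw [Walk.length_append, hql, hrl, ht]
  have hpath : (q.append r).IsPath := (q.append r).isPath_of_length_eq_dist hlen
  obtain ⟨s, hs, hun⟩ := hG.existsUnique_path v x
  have : p = q.append r := by rw [hun p hp, hun _ hpath]
  rw [this]
  exact Walk.subset_support_append_left _ _ q.end_mem_support

/-- The vertex at position `dist v y` on a path from `v` is `y` itself. -/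
lemma getVert_dist (hG : G.IsTree) {p : G.Walk v x} (hp : p.IsPath) (hy : y ∈ p.support) :
    p.getVert (G.dist v y) = y := by
  have hlen : p.length = G.dist v x := path_length_eq hG hp
  have htake : (p.takeUntil y hy).length = G.dist v y := (dist_split hG hlen hy).2.1
  conv_lhs => rw [← p.take_spec hy]
  rw [Walk.getVert_append]
  simp [htake]

/-- Two vertices on a common path at the same distance from the start coincide. -/
lemma eq_of_mem_support_dist_eq (hG : G.IsTree) {p : G.Walk v x} (hp : p.IsPath)
    (hy : y ∈ p.support) (hz : z ∈ p.support) (hd : G.dist v y = G.dist v z) : y = z := by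
  have h1 := getVert_dist hG hp hy
  have h2 := getVert_dist hG hp hz
  rw [hd] at h1
  exact h1.symm.trans h2



lemma concat_isPath (hG : G.IsTree) {p : G.Walk v x} (hp : p.IsPath) (h : G.Adj x y)
    (hy : y ∉ p.support) : (p.concat h).IsPath := by
  rw [Walk.isPath_def, Walk.support_concat, List.nodup_append]
  exact ⟨hp.support_nodup, List.nodup_singleton y, fun a ha b hb he => hy (by rw [List.mem_singleton] at hb; rw [← hb, ← he]; exact ha)⟩

/-- Adjacent vertices have distances from `v` differing by exactly one. -/
lemma adj_dist_cases (hG : G.IsTree) (h : G.Adj x y) :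
    G.dist v y = G.dist v x + 1 ∨ G.dist v x = G.dist v y + 1 := by
  have h1 : G.dist v y ≤ G.dist v x + 1 := by
    have := hG.isConnected.dist_triangle (u := v) (v := x) (w := y)
    rwa [dist_adj hG h] at this
  have h2 : G.dist v x ≤ G.dist v y + 1 := by
    have := hG.isConnected.dist_triangle (u := v) (v := y) (w := x)
    rwa [dist_adj hG h.symm] at this
  have hne : G.dist v x ≠ G.dist v y := by
    intro heq
    obtain ⟨p, hp, hpl⟩ := hG.isConnected.exists_path_of_dist v x
    by_cases hmem : y ∈ p.support
    · have := (dist_split hG hpl hmem).1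
      have hyx : G.dist y x = 1 := dist_adj hG h.symm
      omega
    · have hpath := concat_isPath hG hp h hmem
      have := path_length_eq hG hpath
      rw [Walk.length_concat, hpl] at this
      omega
  omega

lemma mem_descCl_self (hG : G.IsTree) : t ∈ descCl G v t := by
  simp [descCl]

lemma dist_le_of_mem_descCl (hG : G.IsTree) (hx : x ∈ descCl G v t) :
    G.dist v t ≤ G.dist v x := by
  have : G.dist v x = G.dist v t + G.dist t x := hx
  omega

lemma dist_lt_of_mem_descCl (hG : G.IsTree) (hx : x ∈ descCl G v t) (hne : x ≠ t) :
    G.dist v t < G.dist v x := by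
  have h1 : G.dist v x = G.dist v t + G.dist t x := hx
  have h2 : 0 < G.dist t x := hG.isConnected.pos_dist_of_ne (Ne.symm hne)
  omega

lemma descCl_subset (hG : G.IsTree) (hw : w ∈ descCl G v t) :
    descCl G v w ⊆ descCl G v t := by
  intro x hx
  have h1 : G.dist v x = G.dist v w + G.dist w x := hx
  have h2 : G.dist v w = G.dist v t + G.dist t w := hw
  have h3 : G.dist v x ≤ G.dist v t + G.dist t x := hG.isConnected.dist_triangle
  have h4 : G.dist t x ≤ G.dist t w + G.dist w x := hG.isConnected.dist_triangle
  have : G.dist v x = G.dist v t + G.dist t x := by omega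
  exact this

/-- Existence of a child through which a strict descendant passes. -/
lemma exists_child_of_mem (hG : G.IsTree) (hx : x ∈ descCl G v t) (hne : x ≠ t) :
    ∃ w, G.Adj t w ∧ G.dist v w = G.dist v t + 1 ∧ x ∈ descCl G v w := by
  have h1 : G.dist v x = G.dist v t + G.dist t x := hx
  have hpos : 0 < G.dist t x := hG.isConnected.pos_dist_of_ne (Ne.symm hne)
  obtain ⟨q, hq, hql⟩ := hG.isConnected.exists_path_of_dist t x
  cases q with
  | nil => simp at hql; omega
  | cons hadj q' =>
    rename_i w
    have hwmem : w ∈ (Walk.cons hadj q').support := by simp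
    have hsplit := (dist_split hG hql hwmem).1
    have hdw : G.dist t w = 1 := dist_adj hG hadj
    have h5 : G.dist v x ≤ G.dist v w + G.dist w x := hG.isConnected.dist_triangle
    have h6 : G.dist v w ≤ G.dist v t + 1 := by
      have := hG.isConnected.dist_triangle (u := v) (v := t) (w := w)
      omega
    have h7 : G.dist v w = G.dist v t + 1 := by omega
    exact ⟨w, hadj, h7, by show G.dist v x = _; omega⟩

/-- Vertices whose descendant sets intersect and which are equidistant from `v` coincide. -/
lemma eq_of_mem_descCl_dist_eq (hG : G.IsTree) (hw : x ∈ descCl G v w)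
    (hw' : x ∈ descCl G v w') (hd : G.dist v w = G.dist v w') : w = w' := by
  obtain ⟨p, hp, hpl⟩ := hG.isConnected.exists_path_of_dist v x
  have m1 : w ∈ p.support := mem_support_of_dist_eq hG hw hp
  have m2 : w' ∈ p.support := mem_support_of_dist_eq hG hw' hp
  exact eq_of_mem_support_dist_eq hG hp m1 m2 hd

/-- Crossing edge lemma: an edge leaving `descCl v t` must leave from `t` upwards. -/
lemma cross (hG : G.IsTree) (h : G.Adj x y) (hx : x ∈ descCl G v t)
    (hy : y ∉ descCl G v t) : x = t ∧ G.dist v y + 1 = G.dist v t := by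
  have hxd : G.dist v x = G.dist v t + G.dist t x := hx
  rcases adj_dist_cases hG (v := v) h with hc | hc
  · -- y is further: y would be a descendant of t, contradiction
    exfalso
    obtain ⟨p, hp, hpl⟩ := hG.isConnected.exists_path_of_dist v x
    have hymem : y ∉ p.support := by
      intro hmem
      have := (dist_split hG hpl hmem).1
      omega
    have hpath := concat_isPath hG hp h hymem
    have hclen : (p.concat h).length = G.dist v y := by
      rw [Walk.length_concat, hpl]; omega
    have htmem : t ∈ (p.concat h).support := by
      rw [Walk.support_concat]
      exact List.mem_append_left _ (mem_support_of_dist_eq hG hx hp)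
    have := (dist_split hG hclen htmem).1
    have htt : G.dist v t + G.dist t y = G.dist v y := this
    exact hy (by show G.dist v y = _; omega)
  · -- x is further: y is the predecessor of x
    obtain ⟨q, hq, hql⟩ := hG.isConnected.exists_path_of_dist v y
    have hxmem : x ∉ q.support := by
      intro hmem
      have := (dist_split hG hql hmem).1
      have : 0 < G.dist x y := hG.isConnected.pos_dist_of_ne h.ne
      omega
    have hpath := concat_isPath hG hq h.symm hxmem
    have hclen : (q.concat h.symm).length = G.dist v x := by
      rw [Walk.length_concat, hql]; omega
    have htmem : t ∈ (q.concat h.symm).support := mem_support_of_dist_eq hG hx hpath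
    by_cases hxt : x = t
    · refine ⟨hxt, ?_⟩
      have h0 : G.dist v x = G.dist v t := by rw [hxt]
      omega
    · exfalso
      have hxlt : G.dist v t < G.dist v x := dist_lt_of_mem_descCl hG hx hxt
      have htq : t ∈ q.support := by
        rw [Walk.support_concat] at htmem
        rcases List.mem_append.1 htmem with h' | h'
        · exact h'
        · simp at h'
          exact absurd h'.symm hxt
      have := (dist_split hG hql htq).1
      exact hy (by show G.dist v y = _; omega)

lemma exists_parent (hG : G.IsTree) (hxv : x ≠ v) :
    ∃ y, G.Adj y x ∧ G.dist v y + 1 = G.dist v x := by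
  obtain ⟨p, hp, hpl⟩ := hG.isConnected.exists_path_of_dist v x
  have hpos : 0 < G.dist v x := hG.isConnected.pos_dist_of_ne (Ne.symm hxv)
  cases hr : p.reverse with
  | nil => exact (hxv rfl).elim
  | cons hadj r =>
    rename_i y
    have hy : y ∈ p.support := by
      have : y ∈ p.reverse.support := by rw [hr]; simp
      rwa [Walk.support_reverse, List.mem_reverse] at this
    have hyx : y ≠ x := by
      have : p.reverse.IsPath := hp.reverse
      rw [hr] at this
      rw [Walk.cons_isPath_iff] at this
      intro he
      exact this.2 (he ▸ r.start_mem_support)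
    have := (dist_split hG hpl hy).1
    have hd1 : G.dist y x = 1 := dist_adj hG hadj.symm
    exact ⟨y, hadj.symm, by omega⟩

lemma parent_unique (hG : G.IsTree) {y y' : V} (h : G.Adj y t) (h' : G.Adj y' t)
    (hd : G.dist v y + 1 = G.dist v t) (hd' : G.dist v y' + 1 = G.dist v t) : y = y' := by
  obtain ⟨p, hp, hpl⟩ := hG.isConnected.exists_path_of_dist v t
  have key : ∀ z, G.Adj z t → G.dist v z + 1 = G.dist v t → z ∈ p.support := by
    intro z hz hzd
    obtain ⟨q, hq, hql⟩ := hG.isConnected.exists_path_of_dist v z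
    have htq : t ∉ q.support := by
      intro hmem
      have := (dist_split hG hql hmem).1
      have : 0 < G.dist t z := hG.isConnected.pos_dist_of_ne (fun he => by
        rw [he] at hzd; omega)
      omega
    have hpath := concat_isPath hG hq hz htq
    obtain ⟨s, hs, hun⟩ := hG.existsUnique_path v t
    have : p = q.concat hz := by rw [hun p hp, hun _ hpath]
    rw [this, Walk.support_concat]
    exact List.mem_append_left _ q.end_mem_support
  exact eq_of_mem_support_dist_eq hG hp (key y h hd) (key y' h' hd') (by omega)

lemma triple_ncard_le {a b c : V} {s : Set V} [Fintype V] (ha : a ∈ s) (hb : b ∈ s)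
    (hc : c ∈ s) (hab : a ≠ b) (hac : a ≠ c) (hbc : b ≠ c) : 3 ≤ s.ncard := by
  have hsub : ({a, b, c} : Set V) ⊆ s := by
    intro z hz; rcases hz with h | h | h <;> simp_all
  have h3 : ({a, b, c} : Set V).ncard = 3 := by
    rw [Set.ncard_insert_of_notMem (by simp [hab, hac]),
      Set.ncard_insert_of_notMem (by simp [hbc]), Set.ncard_singleton]
  rw [← h3]
  exact Set.ncard_le_ncard hsub (Set.toFinite s)

lemma child_unique_of_not_branch [Fintype V] (hG : G.IsTree) (hxv : x ≠ v)
    (hnb : ¬ IsBranch G x) {c c' : V} (hc : G.Adj x c) (hc' : G.Adj x c')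
    (hdc : G.dist v c = G.dist v x + 1) (hdc' : G.dist v c' = G.dist v x + 1) : c = c' := by
  by_contra hne
  obtain ⟨y, hy, hyd⟩ := exists_parent hG hxv
  have hyc : y ≠ c := fun he => by rw [he] at hyd; omega
  have hyc' : y ≠ c' := fun he => by rw [he] at hyd; omega
  exact hnb (triple_ncard_le (s := G.neighborSet x) hy.symm hc hc' hyc hyc' hne)

lemma zone_not_branch [Fintype V] (hG : G.IsTree) {u : V}
    (hmax : ∀ z, z ≠ v → IsBranch G z → G.dist v z ≤ G.dist v u)
    (hx : G.dist v u < G.dist v x) : x ≠ v ∧ ¬ IsBranch G x := by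
  have hxv : x ≠ v := by
    intro he
    rw [he] at hx
    have h0 : G.dist v v = 0 := SimpleGraph.dist_self
    omega
  exact ⟨hxv, fun hb => by have := hmax x hxv hb; omega⟩

lemma zone_cases [Fintype V] (hG : G.IsTree) {u : V}
    (hmax : ∀ z, z ≠ v → IsBranch G z → G.dist v z ≤ G.dist v u)
    (hx : G.dist v u < G.dist v x) :
    descCl G v x = {x} ∨
      ∃ c, G.Adj x c ∧ G.dist v c = G.dist v x + 1 ∧
        descCl G v x = insert x (descCl G v c) ∧ x ∉ descCl G v c ∧
        (∀ z, G.Adj x z → z ∈ descCl G v x → z = c) := by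
  obtain ⟨hxv, hnb⟩ := zone_not_branch hG hmax hx
  by_cases hsing : descCl G v x ⊆ {x}
  · left
    exact hsing.antisymm (Set.singleton_subset_iff.mpr (mem_descCl_self hG))
  · right
    obtain ⟨x', hx', hx'x⟩ : ∃ x', x' ∈ descCl G v x ∧ x' ≠ x := by
      rcases Set.not_subset.1 hsing with ⟨x', h1, h2⟩
      exact ⟨x', h1, by simpa using h2⟩
    obtain ⟨c, hadj, hdc, _⟩ := exists_child_of_mem hG hx' hx'x
    have hcnot : x ∉ descCl G v c := by
      intro hmem
      have := dist_le_of_mem_descCl hG hmem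
      omega
    refine ⟨c, hadj, hdc, ?_, hcnot, ?_⟩
    · apply Set.Subset.antisymm
      · intro z hz
        by_cases hzx : z = x
        · simp [hzx]
        · obtain ⟨w', hadj', hdw', hzw'⟩ := exists_child_of_mem hG hz hzx
          have : w' = c := child_unique_of_not_branch hG hxv hnb hadj' hadj hdw' hdc
          rw [this] at hzw'
          exact Set.mem_insert_iff.2 (Or.inr hzw')
      · intro z hz
        rcases Set.mem_insert_iff.1 hz with hzx | hzc
        · rw [hzx]; exact mem_descCl_self hG
        · refine descCl_subset hG ?_ hzc
          show G.dist v c = G.dist v x + G.dist x c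
          rw [dist_adj hG hadj]
          omega
    · intro z hadjz hz
      have hzx : z ≠ x := fun he => (he ▸ hadjz).ne' rfl
      obtain ⟨w', hadj', hdw', hzw'⟩ := exists_child_of_mem hG hz hzx
      rcases adj_dist_cases hG (v := v) hadjz with hc1 | hc1
      · -- z is a child of x
        exact child_unique_of_not_branch hG hxv hnb hadjz hadj hc1 hdc
      · -- z is the parent of x: impossible since z ∈ descCl v x
        exfalso
        have := dist_le_of_mem_descCl hG hz
        have hlt := dist_lt_of_mem_descCl hG hz hzx
        omega

/-- ψ of a path with n vertices. -/
def A3 (n : ℕ) : ℕ := n - n / 3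

lemma dissoc_subset {F F' : Set V} (h : IsDissocSet G F) (hsub : F' ⊆ F) :
    IsDissocSet G F' := fun a ha b hb b' hb' hab hab' =>
  h a (hsub ha) b (hsub hb) b' (hsub hb') hab hab'

lemma dissoc_insert_no {F : Set V} {x : V} (hdis : IsDissocSet G F)
    (hnb : ∀ z ∈ F, ¬ G.Adj x z) : IsDissocSet G (insert x F) := by
  intro a ha b hb b' hb' hab hab'
  have memF : ∀ p q : V, p ∈ insert x F → G.Adj p q → p ≠ x → p ∈ F := by
    intro p q hp _ hpx
    rcases Set.mem_insert_iff.1 hp with h | h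
    · exact absurd h hpx
    · exact h
  by_cases hax : a = x
  · exfalso
    have hbx : b ≠ x := fun h => by rw [hax, h] at hab; exact G.irrefl hab
    exact hnb b (memF b a hb hab.symm hbx) (hax ▸ hab)
  · have haF : a ∈ F := memF a b ha hab hax
    have hbF : b ≠ x := fun h => hnb a haF (by rw [← h]; exact hab.symm)
    have hbF' : b' ≠ x := fun h => hnb a haF (by rw [← h]; exact hab'.symm)
    exact hdis a haF b (memF b a hb hab.symm hbF) b' (memF b' a hb' hab'.symm hbF') hab hab'

lemma dissoc_insert_one {F : Set V} {x c : V} (hdis : IsDissocSet G F)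
    (hnb : ∀ z ∈ F, G.Adj x z → z = c) (hc : ∀ z ∈ F, ¬ G.Adj c z) :
    IsDissocSet G (insert x F) := by
  intro a ha b hb b' hb' hab hab'
  have memF : ∀ p : V, p ∈ insert x F → p ≠ x → p ∈ F := by
    intro p hp hpx
    rcases Set.mem_insert_iff.1 hp with h | h
    · exact absurd h hpx
    · exact h
  by_cases hax : a = x
  · have hb1 : b = c := by
      have hbx : b ≠ x := fun h => by rw [hax, h] at hab; exact G.irrefl hab
      exact hnb b (memF b hb hbx) (hax ▸ hab)
    have hb2 : b' = c := by
      have hbx : b' ≠ x := fun h => by rw [hax, h] at hab'; exact G.irrefl hab'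
      exact hnb b' (memF b' hb' hbx) (hax ▸ hab')
    rw [hb1, hb2]
  · have haF : a ∈ F := memF a ha hax
    by_cases hbx : b = x
    · have hac : a = c := hnb a haF (by rw [← hbx]; exact hab.symm)
      by_cases hbx' : b' = x
      · rw [hbx, hbx']
      · exact absurd (hac ▸ hab') (hc b' (memF b' hb' hbx'))
    · by_cases hbx' : b' = x
      · have hac : a = c := hnb a haF (by rw [← hbx']; exact hab'.symm)
        exact absurd (hac ▸ hab) (hc b (memF b hb hbx))
      · exact hdis a haF b (memF b hb hbx) b' (memF b' hb' hbx') hab hab'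

lemma pathBound [Fintype V] (hG : G.IsTree) {u : V}
    (hmax : ∀ z, z ≠ v → IsBranch G z → G.dist v z ≤ G.dist v u) :
    ∀ n, ∀ x : V, G.dist v u < G.dist v x → (descCl G v x).ncard = n →
      ((∀ F : Set V, F ⊆ descCl G v x → IsDissocSet G F → F.ncard ≤ A3 n) ∧
       (∀ F : Set V, F ⊆ descCl G v x → x ∉ F → IsDissocSet G F → F.ncard ≤ A3 (n-1)) ∧
       (2 ≤ n → ∀ F : Set V, F ⊆ descCl G v x → IsDissocSet G F → x ∈ F →
         (∀ z, G.Adj x z → z ∈ descCl G v x → z ∉ F) → F.ncard ≤ 1 + A3 (n-2)) ∧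
       (∃ F : Set V, F ⊆ descCl G v x ∧ IsDissocSet G F ∧ F.ncard = A3 n ∧
         (n % 3 = 0 → x ∉ F) ∧
         (n % 3 = 1 → x ∈ F ∧ ∀ z, G.Adj x z → z ∈ descCl G v x → z ∉ F))) := by
  intro n
  induction n using Nat.strong_induction_on with
  | _ n IH =>
  intro x hx hn
  have hxS : x ∈ descCl G v x := mem_descCl_self hG
  have hn1 : 1 ≤ n := by
    rw [← hn]
    exact (Set.ncard_pos (Set.toFinite _)).mpr ⟨x, hxS⟩
  rcases zone_cases hG hmax hx with hsing | ⟨c, hadj, hdc, hSx, hxc, huniq⟩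
  · -- descCl G v x = {x}
    have hn' : n = 1 := by rw [← hn, hsing]; simp
    subst hn'
    refine ⟨?_, ?_, ?_, ?_⟩
    · intro F hsub _
      have := Set.ncard_le_ncard hsub (Set.toFinite _)
      simpa [hn, A3] using this
    · intro F hsub hxF _
      have hF : F = ∅ := by
        rw [hsing] at hsub
        ext z
        simp only [Set.mem_empty_iff_false, iff_false]
        intro hz
        have := hsub hz
        simp at this
        exact hxF (this ▸ hz)
      simp [hF, A3]
    · intro h2; omega
    · refine ⟨{x}, by rw [hsing], ?_, by simp [A3], by intro h; omega, ?_⟩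
      · intro a ha b hb b' hb' hab hab'
        simp only [Set.mem_singleton_iff] at ha hb
        rw [ha, hb] at hab
        exact absurd hab (G.irrefl)
      · intro _
        refine ⟨rfl, ?_⟩
        intro z hzadj hz
        rw [hsing] at hz
        simp only [Set.mem_singleton_iff] at hz
        rw [hz] at hzadj
        exact absurd hzadj (G.irrefl)
  · -- descCl G v x = insert x (descCl G v c)
    have hcx : c ≠ x := fun h => by rw [h] at hdc; omega
    have hczone : G.dist v u < G.dist v c := by omega
    have hcS : c ∈ descCl G v c := mem_descCl_self hG
    set m := (descCl G v c).ncard with hm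
    have hnm : n = m + 1 := by
      rw [← hn, hSx, Set.ncard_insert_of_notMem hxc]
    have hm1 : 1 ≤ m := (Set.ncard_pos (Set.toFinite _)).mpr ⟨c, hcS⟩
    have IHc := IH m (by omega) c hczone rfl
    -- membership helpers
    have hcmemx : c ∈ descCl G v x := by rw [hSx]; exact Set.mem_insert_of_mem _ hcS
    have hsub_cx : descCl G v c ⊆ descCl G v x := by rw [hSx]; exact Set.subset_insert _ _
    -- cross: any neighbor of x inside descCl v c is c
    have hcross : ∀ z ∈ descCl G v c, G.Adj x z → z = c := by
      intro z hz hzadj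
      exact ((cross hG hzadj.symm hz hxc).1)
    -- part (b)
    have partb : ∀ F : Set V, F ⊆ descCl G v x → x ∉ F → IsDissocSet G F →
        F.ncard ≤ A3 (n-1) := by
      intro F hsub hxF hdis
      have hFc : F ⊆ descCl G v c := by
        intro z hz
        rcases Set.mem_insert_iff.1 (hSx ▸ hsub hz) with h | h
        · exact absurd (h ▸ hz) hxF
        · exact h
      have := IHc.1 F hFc hdis
      simpa [hnm] using this
    -- part (c)
    have partc : ∀ F : Set V, F ⊆ descCl G v x → IsDissocSet G F → x ∈ F →
        (∀ z, G.Adj x z → z ∈ descCl G v x → z ∉ F) → F.ncard ≤ 1 + A3 (n-2) := by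
      intro F hsub hdis hxF hno
      have hcF : c ∉ F := hno c hadj hcmemx
      have hd1 : F \ {x} ⊆ descCl G v c := by
        intro z hz
        rcases Set.mem_insert_iff.1 (hSx ▸ hsub hz.1) with h | h
        · exact absurd h hz.2
        · exact h
      have hd2 : c ∉ F \ {x} := fun h => hcF h.1
      have hbnd := IHc.2.1 (F \ {x}) hd1 hd2 (dissoc_subset hdis Set.diff_subset)
      have hcard : (F \ {x}).ncard + 1 = F.ncard :=
        Set.ncard_diff_singleton_add_one hxF (Set.toFinite _)
      simp only [A3] at *
      omega
    refine ⟨?_, partb, fun _ => partc, ?_⟩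
    · -- part (a)
      intro F hsub hdis
      by_cases hxF : x ∈ F
      · by_cases hcF : c ∈ F
        · -- x and c both in F
          rcases zone_cases hG hmax hczone with hsingc | ⟨c₂, hadj₂, hdc₂, hSc, hcc₂, huniqc⟩
          · -- descCl v c = {c} : n = 2
            have hm' : m = 1 := by rw [hm, hsingc]; simp
            have : F.ncard ≤ n := by
              rw [← hn]; exact Set.ncard_le_ncard hsub (Set.toFinite _)
            have h2 : n = 2 := by omega
            simp only [A3]; omega
          · -- c has a child c₂
            have hc₂F : c₂ ∉ F := by
              intro hmem
              have hxe := hdis c hcF x hxF c₂ hmem hadj.symm hadj₂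
              rw [← hxe] at hdc₂
              omega
            have hd1 : F \ {x} ⊆ descCl G v c := by
              intro z hz
              rcases Set.mem_insert_iff.1 (hSx ▸ hsub hz.1) with h | h
              · exact absurd h hz.2
              · exact h
            have hcd : c ∈ F \ {x} := ⟨hcF, by simp [hcx]⟩
            have hm2 : 2 ≤ m := by
              rw [hm, hSc, Set.ncard_insert_of_notMem hcc₂]
              have : 1 ≤ (descCl G v c₂).ncard :=
                (Set.ncard_pos (Set.toFinite _)).mpr ⟨c₂, mem_descCl_self hG⟩
              omega
            have hno : ∀ z, G.Adj c z → z ∈ descCl G v c → z ∉ F \ {x} := by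
              intro z hzadj hz hmem
              have := huniqc z hzadj hz
              rw [this] at hmem
              exact hc₂F hmem.1
            have hbnd := IHc.2.2.1 hm2 (F \ {x}) hd1
              (dissoc_subset hdis Set.diff_subset) hcd hno
            have hcard : (F \ {x}).ncard + 1 = F.ncard :=
              Set.ncard_diff_singleton_add_one hxF (Set.toFinite _)
            have h3 : 3 ≤ n := by omega
            have : m - 2 = n - 3 := by omega
            simp only [A3] at *
            omega
        · -- x ∈ F, c ∉ F
          have hd1 : F \ {x} ⊆ descCl G v c := by
            intro z hz
            rcases Set.mem_insert_iff.1 (hSx ▸ hsub hz.1) with h | h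
            · exact absurd h hz.2
            · exact h
          have hd2 : c ∉ F \ {x} := fun h => hcF h.1
          have hbnd := IHc.2.1 (F \ {x}) hd1 hd2 (dissoc_subset hdis Set.diff_subset)
          have hcard : (F \ {x}).ncard + 1 = F.ncard :=
            Set.ncard_diff_singleton_add_one hxF (Set.toFinite _)
          have h2 : 2 ≤ n := by omega
          have : m - 1 = n - 2 := by omega
          simp only [A3] at *
          omega
      · -- x ∉ F
        have := partb F hsub hxF hdis
        have : A3 (n - 1) ≤ A3 n := by simp only [A3]; omega
        simp only [A3] at *
        omega
    · -- part (e) : existence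
      obtain ⟨Fc, hFcs, hFcd, hFcc, hFc0, hFc1⟩ := IHc.2.2.2
      by_cases h0 : n % 3 = 0
      · refine ⟨Fc, hFcs.trans hsub_cx, hFcd, ?_, fun _ => fun h => (hxc (hFcs h)), ?_⟩
        · rw [hFcc]; simp only [A3]; omega
        · intro h1; exact absurd h1 (by omega)
      · by_cases h1 : n % 3 = 1
        · -- m % 3 = 0 : c ∉ Fc ; F = insert x Fc
          have hcFc : c ∉ Fc := hFc0 (by omega)
          have hnonb : ∀ z ∈ Fc, ¬ G.Adj x z := by
            intro z hz hzadj
            exact hcFc ((hcross z (hFcs hz) hzadj) ▸ hz)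
          have hxFc : x ∉ Fc := fun h => hxc (hFcs h)
          refine ⟨insert x Fc, ?_, dissoc_insert_no hFcd hnonb, ?_, ?_, ?_⟩
          · rw [hSx]; exact Set.insert_subset_insert hFcs
          · rw [Set.ncard_insert_of_notMem hxFc, hFcc]
            simp only [A3]; omega
          · intro h; omega
          · intro _
            refine ⟨Set.mem_insert _ _, ?_⟩
            intro z hzadj hz hmem
            rcases Set.mem_insert_iff.1 hmem with h | h
            · rw [h] at hzadj; exact G.irrefl hzadj
            · exact hnonb z h hzadj
        · -- n % 3 = 2 : m % 3 = 1 : c ∈ Fc with no neighbors in Fc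
          have h2 : n % 3 = 2 := by omega
          obtain ⟨hcFc, hcno⟩ := hFc1 (by omega)
          have hxFc : x ∉ Fc := fun h => hxc (hFcs h)
          have hnb : ∀ z ∈ Fc, G.Adj x z → z = c := fun z hz hzadj =>
            hcross z (hFcs hz) hzadj
          have hcno' : ∀ z ∈ Fc, ¬ G.Adj c z := fun z hz hzadj =>
            hcno z hzadj (hFcs hz) hz
          refine ⟨insert x Fc, ?_, dissoc_insert_one hFcd hnb hcno', ?_, ?_, ?_⟩
          · rw [hSx]; exact Set.insert_subset_insert hFcs
          · rw [Set.ncard_insert_of_notMem hxFc, hFcc]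
            simp only [A3]; omega
          · intro h; omega
          · intro h; omega

lemma ncard_biUnion_le [Fintype V] (s : Finset V) (g : V → Set V) :
    (⋃ w ∈ s, g w).ncard ≤ ∑ w ∈ s, (g w).ncard := by
  classical
  induction s using Finset.induction_on with
  | empty => simp
  | insert a s hnotmem ih =>
    rw [Finset.sum_insert hnotmem]
    have : (⋃ w ∈ insert a s, g w) = g a ∪ ⋃ w ∈ s, g w := by
      simp [Set.biUnion_insert]
    rw [this]
    exact le_trans (Set.ncard_union_le _ _) (by omega)

lemma ncard_biUnion_eq [Fintype V] (s : Finset V) (g : V → Set V)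
    (hdisj : ∀ w ∈ s, ∀ w' ∈ s, w ≠ w' → Disjoint (g w) (g w')) :
    (⋃ w ∈ s, g w).ncard = ∑ w ∈ s, (g w).ncard := by
  classical
  induction s using Finset.induction_on with
  | empty => simp
  | insert a s hnotmem ih =>
    rw [Finset.sum_insert hnotmem]
    have he : (⋃ w ∈ insert a s, g w) = g a ∪ ⋃ w ∈ s, g w := by
      simp [Set.biUnion_insert]
    have hd : Disjoint (g a) (⋃ w ∈ s, g w) := by
      rw [Set.disjoint_iUnion_right]
      intro w
      rw [Set.disjoint_iUnion_right]
      intro hw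
      exact hdisj a (Finset.mem_insert_self _ _) w (Finset.mem_insert_of_mem hw)
        (fun h => hnotmem (h ▸ hw))
    rw [he, Set.ncard_union_eq hd (Set.toFinite _) (Set.toFinite _),
      ih (fun w hw w' hw' hne => hdisj w (Finset.mem_insert_of_mem hw) w'
        (Finset.mem_insert_of_mem hw') hne)]

lemma not_mem_descCl_of_dist_lt (hG : G.IsTree) (h : G.dist v x < G.dist v t) :
    x ∉ descCl G v t := fun hm => by
  have := dist_le_of_mem_descCl hG hm
  omega

end Stmt10Aux


open Stmt10Aux

theorem stmt10 {V : Type*} [Fintype V] (G : SimpleGraph V) (hG : G.IsTree) (v u : V)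
    (huv : u ≠ v) (hbr : IsBranch G u)
    (hmax : ∀ x, x ≠ v → IsBranch G x → G.dist v x ≤ G.dist v u)
    (hC : 1 ≤ (childMod G v u 2).ncard ∨ 2 ≤ (childMod G v u 1).ncard)
    (F' : Set V) (hF' : IsMaxDissocOn G (descCl G v u)ᶜ F')
    (Fw : V → Set V) (hFw : ∀ w, IsChild G v u w → IsMaxDissocOn G (descCl G v w) (Fw w)) :
    IsMaxDissocSet G (F' ∪ ⋃ w ∈ {w | IsChild G v u w}, Fw w) := by
  classical
  have hCfin : ({w | IsChild G v u w} : Set V).Finite := Set.toFinite _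
  set cs : Finset V := hCfin.toFinset with hcs
  have hmemcs : ∀ w, w ∈ cs ↔ IsChild G v u w := by
    intro w; simp [hcs]
  have hzw : ∀ w, IsChild G v u w → G.dist v u < G.dist v w := by
    intro w hw; have := hw.2; omega
  have hwSw : ∀ w : V, w ∈ descCl G v w := fun w => mem_descCl_self hG
  have hSwSu : ∀ w, IsChild G v u w → descCl G v w ⊆ descCl G v u := by
    intro w hw
    refine descCl_subset hG ?_
    show G.dist v w = G.dist v u + G.dist u w
    rw [dist_adj hG hw.1, hw.2]
  have huSw : ∀ w, IsChild G v u w → u ∉ descCl G v w := by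
    intro w hw
    exact not_mem_descCl_of_dist_lt hG (hzw w hw)
  have huSu : u ∈ descCl G v u := mem_descCl_self hG
  have hF'sub := hF'.1
  have hF'dis := hF'.2.1
  have hF'max := hF'.2.2
  -- rewrite the union over the set of children as a union over cs
  have hUeq : (⋃ w ∈ {w | IsChild G v u w}, Fw w) = ⋃ w ∈ cs, Fw w := by
    ext z
    simp only [Set.mem_iUnion, exists_prop, Set.mem_setOf_eq, Finset.mem_coe]
    constructor
    · rintro ⟨w, hw, hz⟩; exact ⟨w, (hmemcs w).2 hw, hz⟩
    · rintro ⟨w, hw, hz⟩; exact ⟨w, (hmemcs w).1 hw, hz⟩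
  have huF' : u ∉ F' := fun h => hF'sub h huSu
  have huU : u ∉ F' ∪ ⋃ w ∈ {w | IsChild G v u w}, Fw w := by
    intro h
    rcases h with h | h
    · exact huF' h
    · rw [hUeq] at h
      simp only [Set.mem_iUnion, exists_prop] at h
      obtain ⟨w, hw, hz⟩ := h
      exact huSw w ((hmemcs w).1 hw) ((hFw w ((hmemcs w).1 hw)).1 hz)
  -- membership classification for the union
  have hmemU : ∀ a, a ∈ F' ∪ (⋃ w ∈ {w | IsChild G v u w}, Fw w) ↔
      a ∈ F' ∨ ∃ w, IsChild G v u w ∧ a ∈ Fw w := by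
    intro a
    simp only [Set.mem_union, Set.mem_iUnion, exists_prop, Set.mem_setOf_eq]
  -- adjacency stays within a part
  have hpart : ∀ a b, G.Adj a b →
      a ∈ F' ∪ (⋃ w ∈ {w | IsChild G v u w}, Fw w) →
      b ∈ F' ∪ (⋃ w ∈ {w | IsChild G v u w}, Fw w) →
      (a ∈ F' ∧ b ∈ F') ∨ ∃ w, IsChild G v u w ∧ a ∈ Fw w ∧ b ∈ Fw w := by
    intro a b hab ha hb
    rcases (hmemU a).1 ha with haF | ⟨w, hw, haw⟩
    · left
      refine ⟨haF, ?_⟩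
      rcases (hmemU b).1 hb with hbF | ⟨w, hw, hbw⟩
      · exact hbF
      · exfalso
        have hbSu : b ∈ descCl G v u := hSwSu w hw ((hFw w hw).1 hbw)
        have haSu : a ∉ descCl G v u := hF'sub haF
        have := (cross hG hab.symm hbSu haSu).1
        rw [this] at hbw
        exact huSw w hw ((hFw w hw).1 hbw)
    · right
      refine ⟨w, hw, haw, ?_⟩
      rcases (hmemU b).1 hb with hbF | ⟨w', hw', hbw'⟩
      · exfalso
        have haSu : a ∈ descCl G v u := hSwSu w hw ((hFw w hw).1 haw)
        have hbSu : b ∉ descCl G v u := hF'sub hbF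
        have := (cross hG hab haSu hbSu).1
        rw [this] at haw
        exact huSw w hw ((hFw w hw).1 haw)
      · have haSw : a ∈ descCl G v w := (hFw w hw).1 haw
        have hbSw' : b ∈ descCl G v w' := (hFw w' hw').1 hbw'
        have hww' : w = w' := by
          by_cases hbSw : b ∈ descCl G v w
          · exact eq_of_mem_descCl_dist_eq hG hbSw hbSw' (by rw [hw.2, hw'.2])
          · exfalso
            obtain ⟨_, hd⟩ := cross hG hab haSw hbSw
            have := dist_le_of_mem_descCl hG hbSw'
            have h2 := hw.2
            have h3 := hw'.2
            omega
        rw [hww']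
        exact hbw'
  constructor
  · -- the union is a dissociation set
    intro a ha b hb b' hb' hab hab'
    rcases hpart a b hab ha hb with ⟨haF, hbF⟩ | ⟨w, hw, haw, hbw⟩
    · rcases hpart a b' hab' ha hb' with ⟨_, hbF'⟩ | ⟨w, hw, haw, _⟩
      · exact hF'dis a haF b hbF b' hbF' hab hab'
      · exact absurd (hSwSu w hw ((hFw w hw).1 haw)) (hF'sub haF)
    · rcases hpart a b' hab' ha hb' with ⟨haF, _⟩ | ⟨w', hw', haw', hbw'⟩
      · exact absurd (hSwSu w hw ((hFw w hw).1 haw)) (hF'sub haF)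
      · have hww' : w = w' :=
          eq_of_mem_descCl_dist_eq hG ((hFw w hw).1 haw) ((hFw w' hw').1 haw')
            (by rw [hw.2, hw'.2])
        subst hww'
        exact (hFw w hw).2.1 a haw b hbw b' hbw' hab hab'
  · -- maximality
    intro F hdis
    -- cardinality of the union
    have hdisjF' : Disjoint F' (⋃ w ∈ cs, Fw w) := by
      rw [Set.disjoint_iUnion_right]
      intro w
      rw [Set.disjoint_iUnion_right]
      intro hw
      rw [Set.disjoint_left]
      intro a haF haw
      exact hF'sub haF (hSwSu w ((hmemcs w).1 hw) ((hFw w ((hmemcs w).1 hw)).1 haw))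
    have hdisjWW : ∀ w ∈ cs, ∀ w' ∈ cs, w ≠ w' → Disjoint (Fw w) (Fw w') := by
      intro w hw w' hw' hne
      rw [Set.disjoint_left]
      intro a haw haw'
      have h1 := (hmemcs w).1 hw
      have h2 := (hmemcs w').1 hw'
      exact hne (eq_of_mem_descCl_dist_eq hG ((hFw w h1).1 haw) ((hFw w' h2).1 haw')
        (by rw [h1.2, h2.2]))
    have hUcard : (F' ∪ ⋃ w ∈ {w | IsChild G v u w}, Fw w).ncard =
        F'.ncard + ∑ w ∈ cs, (Fw w).ncard := by
      rw [hUeq, Set.ncard_union_eq hdisjF' (Set.toFinite _) (Set.toFinite _),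
        ncard_biUnion_eq cs Fw hdisjWW]
    rw [hUcard]
    -- decompose F
    have hsplit : F.ncard = (F ∩ descCl G v u).ncard + (F ∩ (descCl G v u)ᶜ).ncard := by
      rw [← Set.ncard_union_eq (Disjoint.mono Set.inter_subset_right
        Set.inter_subset_right disjoint_compl_right) (Set.toFinite _) (Set.toFinite _),
        Set.inter_union_compl]
    have hF'bnd : (F ∩ (descCl G v u)ᶜ).ncard ≤ F'.ncard :=
      hF'max _ Set.inter_subset_right (dissoc_subset hdis Set.inter_subset_left)
    have hsub3 : F ∩ descCl G v u ⊆ (F ∩ {u}) ∪ ⋃ w ∈ cs, (F ∩ descCl G v w) := by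
      rintro z ⟨hzF, hzSu⟩
      by_cases hzu : z = u
      · exact Set.mem_union_left _ ⟨hzF, by simp [hzu]⟩
      · obtain ⟨w, hadj, hd, hzw⟩ := exists_child_of_mem hG hzSu hzu
        refine Set.mem_union_right _ ?_
        simp only [Set.mem_iUnion, exists_prop]
        exact ⟨w, (hmemcs w).2 ⟨hadj, hd⟩, hzF, hzw⟩
    have hSubnd : (F ∩ descCl G v u).ncard ≤
        (F ∩ {u}).ncard + ∑ w ∈ cs, (F ∩ descCl G v w).ncard := by
      refine le_trans (Set.ncard_le_ncard hsub3 (Set.toFinite _)) ?_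
      refine le_trans (Set.ncard_union_le _ _) ?_
      exact Nat.add_le_add_left (ncard_biUnion_le cs _) _
    have hFbound : ∀ w, IsChild G v u w → (F ∩ descCl G v w).ncard ≤ (Fw w).ncard := by
      intro w hw
      exact (hFw w hw).2.2 _ Set.inter_subset_right (dissoc_subset hdis Set.inter_subset_left)
    by_cases huF : u ∈ F
    · -- u ∈ F : need the key saving of one unit
      have hkey : ∀ w, IsChild G v u w →
          ((descCl G v w).ncard % 3 = 2 ∨ ((descCl G v w).ncard % 3 = 1 ∧ w ∉ F)) →
          (F ∩ descCl G v w).ncard + 1 ≤ (Fw w).ncard := by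
        intro w hw hmod
        have pb := pathBound hG hmax (descCl G v w).ncard w (hzw w hw) rfl
        have hn1 : 1 ≤ (descCl G v w).ncard :=
          (Set.ncard_pos (Set.toFinite _)).mpr ⟨w, hwSw w⟩
        have hA : A3 (descCl G v w).ncard ≤ (Fw w).ncard := by
          obtain ⟨F₀, hs, hd, hc, _, _⟩ := pb.2.2.2
          rw [← hc]
          exact (hFw w hw).2.2 F₀ hs hd
        by_cases hwF : w ∈ F
        · have hmod2 : (descCl G v w).ncard % 3 = 2 := by
            rcases hmod with h | h
            · exact h
            · exact absurd hwF h.2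
          have h2 : 2 ≤ (descCl G v w).ncard := by omega
          have hno : ∀ z, G.Adj w z → z ∈ descCl G v w → z ∉ F ∩ descCl G v w := by
            intro z hadj hz hmem
            have := hdis w hwF u huF z hmem.1 hw.1.symm hadj
            exact huSw w hw (this ▸ hz)
          have := pb.2.2.1 h2 (F ∩ descCl G v w) Set.inter_subset_right
            (dissoc_subset hdis Set.inter_subset_left) ⟨hwF, hwSw w⟩ hno
          simp only [A3] at *
          omega
        · have hwFm : w ∉ F ∩ descCl G v w := fun h => hwF h.1
          have := pb.2.1 (F ∩ descCl G v w) Set.inter_subset_right hwFm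
            (dissoc_subset hdis Set.inter_subset_left)
          have hmod' : (descCl G v w).ncard % 3 = 1 ∨ (descCl G v w).ncard % 3 = 2 := by
            rcases hmod with h | h
            · exact Or.inr h
            · exact Or.inl h.1
          simp only [A3] at *
          omega
      -- find the special child
      have hstar : ∃ w, IsChild G v u w ∧ (F ∩ descCl G v w).ncard + 1 ≤ (Fw w).ncard := by
        rcases hC with h2c | h1c
        · obtain ⟨w, hwc, hwm⟩ := Set.nonempty_of_ncard_ne_zero
            (s := childMod G v u 2) (by omega)
          exact ⟨w, hwc, hkey w hwc (Or.inl hwm)⟩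
        · obtain ⟨w1, hw1, w2, hw2, hne⟩ := (Set.one_lt_ncard (Set.toFinite _)).1
            (by omega : 1 < (childMod G v u 1).ncard)
          by_cases hw1F : w1 ∈ F
          · have hw2F : w2 ∉ F := by
              intro hw2F
              exact hne (hdis u huF w1 hw1F w2 hw2F hw1.1.1 hw2.1.1)
            exact ⟨w2, hw2.1, hkey w2 hw2.1 (Or.inr ⟨hw2.2, hw2F⟩)⟩
          · exact ⟨w1, hw1.1, hkey w1 hw1.1 (Or.inr ⟨hw1.2, hw1F⟩)⟩
      obtain ⟨ws, hws, hwsbnd⟩ := hstar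
      have hwscs : ws ∈ cs := (hmemcs ws).2 hws
      have hsum : ∑ w ∈ cs, (F ∩ descCl G v w).ncard + 1 ≤ ∑ w ∈ cs, (Fw w).ncard := by
        rw [← Finset.sum_erase_add cs _ hwscs,
          ← Finset.sum_erase_add cs (fun w => (Fw w).ncard) hwscs]
        have herase : ∑ w ∈ cs.erase ws, (F ∩ descCl G v w).ncard ≤
            ∑ w ∈ cs.erase ws, (Fw w).ncard :=
          Finset.sum_le_sum (fun w hw => hFbound w ((hmemcs w).1 (Finset.mem_of_mem_erase hw)))
        omega
      have hu1 : (F ∩ {u}).ncard ≤ 1 := by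
        have : F ∩ {u} ⊆ {u} := Set.inter_subset_right
        have := Set.ncard_le_ncard this (Set.toFinite _)
        simpa using this
      omega
    · -- u ∉ F
      have hu0 : (F ∩ {u}).ncard = 0 := by
        have : F ∩ {u} = ∅ := by
          ext z
          simp only [Set.mem_inter_iff, Set.mem_singleton_iff, Set.mem_empty_iff_false,
            iff_false, not_and]
          intro hz hzu
          exact huF (hzu ▸ hz)
        simp [this]
      have hsum : ∑ w ∈ cs, (F ∩ descCl G v w).ncard ≤ ∑ w ∈ cs, (Fw w).ncard :=
        Finset.sum_le_sum (fun w hw => hFbound w ((hmemcs w).1 hw))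
      omega
end
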